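/- arXiv:1910.13244 — 6 statements merged into one kernel-verified Lean document; each statement's English description precedes it below -/
import Mathlib

section
/- The poset of m-divisible non-crossing t-partitions of [mn] under refinement is graded of rank n−t, with the rank of a partition π equal to n minus the number of blocks of π; in particular the minimum possible number of blocks of such a partition is t. -/
/-!
The points `1, …, t` lie in distinct blocks, and every block has at least `m` of the `m * n`
elements, so there are between `t` and `n` blocks. Both bounds are attained by comb partitions:
block `i < t` is the tooth `i + 1` together with an interval beyond `t`, the remaining blocks are
intervals, and suitable cut points give any number of blocks between `t` and `n`.

For a cover `π ⋖ π'`, take a block `B₀` of `π'` that is not a block of `π`, and let `B₁`, `B₂`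
be the blocks of `π` containing the least element of `B₀` and the least element of `B₀ \ B₁`.
Every other block of `π` inside `B₀` lies to the right of a point of `B₁` and of a point of
`B₂`, so a crossing with `B₁ ∪ B₂` transfers to a crossing with `B₁` or with `B₂` alone; hence
merging `B₁` and `B₂` stays in `NC(m)_{n,t}`. The merge lies strictly above `π` and below `π'`,
so it is `π'`, which therefore has exactly one block fewer than `π`.
-/

/-- `π` is an `m`-divisible non-crossing `t`-partition of `[m*n] = {1,…,m*n}`:
every block has size divisible by `m`, no block meets `{1,…,t}` in more than one
element, and the `t`-non-crossing condition holds. -/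
def IsNCPart (m n t : ℕ) (π : Finpartition (Finset.Icc 1 (m * n))) : Prop :=
  (∀ B ∈ π.parts, m ∣ B.card) ∧
  (∀ B ∈ π.parts, (B ∩ Finset.Icc 1 t).card ≤ 1) ∧
  ¬ ∃ i j k l : ℕ, 1 ≤ i ∧ i < j ∧ j < k ∧ k < l ∧ l ≤ m * n ∧
    ((j ≤ t ∧ ∃ B ∈ π.parts, ∃ B' ∈ π.parts, B ≠ B' ∧
        i ∈ B ∧ l ∈ B ∧ j ∈ B' ∧ k ∈ B') ∨
     (t < j ∧ ∃ B ∈ π.parts, ∃ B' ∈ π.parts, B ≠ B' ∧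
        i ∈ B ∧ k ∈ B ∧ j ∈ B' ∧ l ∈ B'))

/-- The poset of `m`-divisible non-crossing `t`-partitions of `[m*n]`,
with the refinement order inherited from `Finpartition`. -/
abbrev NCP (m n t : ℕ) := {π : Finpartition (Finset.Icc 1 (m * n)) // IsNCPart m n t π}

open Finset

def Crosses (t : ℕ) (A B : Finset ℕ) : Prop :=
  ∃ i j k l : ℕ, i < j ∧ j < k ∧ k < l ∧
    (j ≤ t ∧ i ∈ A ∧ l ∈ A ∧ j ∈ B ∧ k ∈ B ∨ t < j ∧ i ∈ A ∧ k ∈ A ∧ j ∈ B ∧ l ∈ B)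

section Crosses

variable {t : ℕ} {A A' B B' C M : Finset ℕ}

theorem Crosses.mono (h : Crosses t A B) (hA : A ⊆ A') (hB : B ⊆ B') : Crosses t A' B' := by
  obtain ⟨i, j, k, l, hij, hjk, hkl, ⟨hj, hi, hl, hj', hk⟩ | ⟨hj, hi, hk, hj', hl⟩⟩ := h
  · exact ⟨i, j, k, l, hij, hjk, hkl, .inl ⟨hj, hA hi, hA hl, hB hj', hB hk⟩⟩
  · exact ⟨i, j, k, l, hij, hjk, hkl, .inr ⟨hj, hA hi, hA hk, hB hj', hB hl⟩⟩

theorem exists_mem_forall_crosses (h : Crosses t M C ∨ Crosses t C M) :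
    ∃ x ∈ M, ∀ ⦃X : Finset ℕ⦄ ⦃p : ℕ⦄, x ∈ X → p ∈ X → 0 < p → (∀ c ∈ C, p < c) →
      #(X ∩ Icc 1 t) ≤ 1 → Crosses t X C := by
  obtain ⟨i, j, k, l, hij, hjk, hkl, ⟨hj, hi, hl, hj', hk⟩ | ⟨hj, hi, hk, hj', hl⟩⟩ |
      ⟨i, j, k, l, hij, hjk, hkl, ⟨hj, hi, hl, hj', hk⟩ | ⟨hj, hi, hk, hj', hl⟩⟩ := h
  · exact ⟨l, hl, fun X p hlX hpX _ hpC _ ↦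
      ⟨p, j, k, l, hpC j hj', hjk, hkl, .inl ⟨hj, hpX, hlX, hj', hk⟩⟩⟩
  · exact ⟨k, hk, fun X p hkX hpX _ hpC _ ↦
      ⟨p, j, k, l, hpC j hj', hjk, hkl, .inr ⟨hj, hpX, hkX, hj', hl⟩⟩⟩
  · refine ⟨j, hj', fun X p hjX hpX hp hpC hX ↦ ?_⟩
    have hpi := hpC i hi
    by_cases hti : t < i
    · exact ⟨p, i, j, l, hpi, hij, hjk.trans hkl, .inr ⟨hti, hpX, hjX, hi, hl⟩⟩
    · -- otherwise `p < i ≤ t` and `j ≤ t` are two points of `X` in `[1, t]`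
      have : p = j := card_le_one.1 hX p (by simp [hpX]; omega) j (by simp [hjX]; omega)
      omega
  · by_cases hti : t < i
    · exact ⟨j, hj', fun X p hjX hpX _ hpC _ ↦
        ⟨p, i, j, k, hpC i hi, hij, hjk, .inr ⟨hti, hpX, hjX, hi, hk⟩⟩⟩
    · exact ⟨l, hl, fun X p hlX hpX _ hpC _ ↦
        ⟨p, i, k, l, hpC i hi, hij.trans hjk, hkl, .inl ⟨by omega, hpX, hlX, hi, hk⟩⟩⟩

theorem not_crosses_union {p p' : ℕ} (hp : p ∈ A) (hp' : p' ∈ A') (hp0 : 0 < p) (hp'0 : 0 < p')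
    (hpC : ∀ c ∈ C, p < c) (hp'C : ∀ c ∈ C, p' < c)
    (hA : #(A ∩ Icc 1 t) ≤ 1) (hA' : #(A' ∩ Icc 1 t) ≤ 1)
    (hAC : ¬ Crosses t A C) (hA'C : ¬ Crosses t A' C) :
    ¬ Crosses t (A ∪ A') C ∧ ¬ Crosses t C (A ∪ A') := by
  rw [← not_or]
  intro h
  obtain ⟨x, hx, hX⟩ := exists_mem_forall_crosses h
  rcases mem_union.1 hx with hxA | hxA'
  · exact hAC (hX hxA hp hp0 hpC hA)
  · exact hA'C (hX hxA' hp' hp'0 hp'C hA')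

end Crosses

theorem isNCPart_iff {m n t : ℕ} {π : Finpartition (Icc 1 (m * n))} :
    IsNCPart m n t π ↔ (∀ B ∈ π.parts, m ∣ #B) ∧ (∀ B ∈ π.parts, #(B ∩ Icc 1 t) ≤ 1) ∧
      (π.parts : Set (Finset ℕ)).Pairwise (fun B B' ↦ ¬ Crosses t B B') := by
  refine and_congr_right' (and_congr_right' ⟨?_, ?_⟩)
  · rintro h B hB B' hB' hne
      ⟨i, j, k, l, hij, hjk, hkl, ⟨hj, hi, hl, hj', hk⟩ | ⟨hj, hi, hk, hj', hl⟩⟩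
    · have hi1 := (mem_Icc.1 (π.le hB hi)).1
      have hlN := (mem_Icc.1 (π.le hB hl)).2
      exact h ⟨i, j, k, l, hi1, hij, hjk, hkl, hlN, .inl ⟨hj, B, hB, B', hB', hne, hi, hl, hj', hk⟩⟩
    · have hi1 := (mem_Icc.1 (π.le hB hi)).1
      have hlN := (mem_Icc.1 (π.le hB' hl)).2
      exact h ⟨i, j, k, l, hi1, hij, hjk, hkl, hlN, .inr ⟨hj, B, hB, B', hB', hne, hi, hk, hj', hl⟩⟩
  · rintro h ⟨i, j, k, l, -, hij, hjk, hkl, -, ⟨hj, B, hB, B', hB', hne, hi, hl, hj', hk⟩ |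
      ⟨hj, B, hB, B', hB', hne, hi, hk, hj', hl⟩⟩
    · exact h hB hB' hne ⟨i, j, k, l, hij, hjk, hkl, .inl ⟨hj, hi, hl, hj', hk⟩⟩
    · exact h hB hB' hne ⟨i, j, k, l, hij, hjk, hkl, .inr ⟨hj, hi, hk, hj', hl⟩⟩

namespace Finpartition

section

variable {α : Type*} [DecidableEq α] {s : Finset α}

def mergeParts (P : Finpartition s) (S : Finset (Finset α)) (hS : S ⊆ P.parts)
    (hne : S.Nonempty) : Finpartition s where
  parts := insert (S.sup id) (P.parts \ S)
  supIndep := by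
    rw [supIndep_iff_pairwiseDisjoint, coe_insert, Set.pairwiseDisjoint_insert]
    refine ⟨P.disjoint.subset (by simp), fun C hC _ ↦ ?_⟩
    rw [mem_coe, mem_sdiff] at hC
    refine Finset.disjoint_sup_left.2 fun B hB ↦ P.disjoint (hS hB) hC.1 ?_
    rintro rfl
    exact hC.2 hB
  sup_parts := by
    rw [sup_insert, id, ← sup_union, union_sdiff_of_subset hS, P.sup_parts]
  bot_notMem := by
    obtain ⟨B, hB⟩ := hne
    rw [mem_insert, not_or]
    exact ⟨fun h ↦ (P.nonempty_of_mem_parts (hS hB)).ne_empty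
      (le_bot_iff.1 (h ▸ le_sup (f := id) hB)), fun h ↦ P.bot_notMem (mem_sdiff.1 h).1⟩

variable {P Q : Finpartition s} {S : Finset (Finset α)} {hS : S ⊆ P.parts} {hne : S.Nonempty}

theorem parts_mergeParts : (P.mergeParts S hS hne).parts = insert (S.sup id) (P.parts \ S) :=
  rfl

theorem le_mergeParts : P ≤ P.mergeParts S hS hne := by
  intro B hB
  by_cases hBS : B ∈ S
  · exact ⟨S.sup id, mem_insert_self _ _, le_sup (f := id) hBS⟩
  · exact ⟨B, mem_insert_of_mem (mem_sdiff.2 ⟨hB, hBS⟩), le_rfl⟩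

theorem card_mergeParts : #(P.mergeParts S hS hne).parts + #S = #P.parts + 1 := by
  have hnot : S.sup id ∉ P.parts \ S := by
    intro h
    obtain ⟨B, hB⟩ := hne
    obtain ⟨x, hx⟩ := P.nonempty_of_mem_parts (hS hB)
    have := P.eq_of_mem_parts (mem_sdiff.1 h).1 (hS hB) (le_sup (f := id) hB hx) hx
    exact (mem_sdiff.1 h).2 (this ▸ hB)
  rw [parts_mergeParts, card_insert_of_notMem hnot, card_sdiff_of_subset hS]
  have := card_le_card hS
  omega

theorem mergeParts_le (hPQ : P ≤ Q) {b : Finset α} (hb : b ∈ Q.parts) (hSb : ∀ a ∈ S, a ⊆ b) :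
    P.mergeParts S hS hne ≤ Q := by
  intro B hB
  rcases mem_insert.1 hB with rfl | hB
  · exact ⟨b, hb, Finset.sup_le hSb⟩
  · exact hPQ (mem_sdiff.1 hB).1

theorem part_subset_of_le (hPQ : P ≤ Q) {b : Finset α} (hb : b ∈ Q.parts) {x : α} (hx : x ∈ b) :
    P.part x ⊆ b := by
  obtain ⟨c, hc, hle⟩ := hPQ (P.part_mem.2 (Q.le hb hx))
  rwa [Q.eq_of_mem_parts hc hb (hle (P.mem_part (Q.le hb hx))) hx] at hle

theorem exists_mem_parts_notMem_of_lt (h : P < Q) : ∃ b ∈ Q.parts, b ∉ P.parts := by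
  by_contra! H
  exact h.not_ge fun b hb ↦ ⟨b, H b hb, le_rfl⟩

end

theorem exists_two_lowest_parts_of_lt {α : Type*} [LinearOrder α] {s : Finset α}
    {P Q : Finpartition s} (h : P < Q) :
    ∃ b ∈ Q.parts, ∃ a₁ ∈ P.parts, ∃ a₂ ∈ P.parts, a₁ ≠ a₂ ∧ a₁ ⊆ b ∧ a₂ ⊆ b ∧
      ∃ x₁ ∈ a₁, ∃ x₂ ∈ a₂, ∀ z ∈ b, z ∉ a₁ → z ∉ a₂ → x₁ < z ∧ x₂ < z := by
  obtain ⟨b, hb, hbP⟩ := exists_mem_parts_notMem_of_lt h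
  have hbne := Q.nonempty_of_mem_parts hb
  set x₁ := b.min' hbne
  have hx₁ : x₁ ∈ b := min'_mem _ _
  have ha₁b := part_subset_of_le h.le hb hx₁
  have hrest : (b \ P.part x₁).Nonempty := by
    rw [sdiff_nonempty]
    intro hba₁
    exact hbP (ha₁b.antisymm hba₁ ▸ P.part_mem.2 (Q.le hb hx₁))
  set x₂ := (b \ P.part x₁).min' hrest
  have hx₂ : x₂ ∈ b \ P.part x₁ := min'_mem _ _
  have hx₂b := (mem_sdiff.1 hx₂).1
  have hx₂s := Q.le hb hx₂b
  refine ⟨b, hb, P.part x₁, P.part_mem.2 (Q.le hb hx₁), P.part x₂, P.part_mem.2 hx₂s,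
    fun h12 ↦ (mem_sdiff.1 hx₂).2 (h12 ▸ P.mem_part hx₂s), ha₁b,
    part_subset_of_le h.le hb hx₂b, x₁, P.mem_part (Q.le hb hx₁), x₂, P.mem_part hx₂s,
    fun z hz hz₁ hz₂ ↦ ⟨?_, ?_⟩⟩
  · exact (min'_le _ _ hz).lt_of_ne fun h ↦ hz₁ (h ▸ P.mem_part (Q.le hb hx₁))
  · exact (min'_le _ _ (mem_sdiff.2 ⟨hz, hz₁⟩)).lt_of_ne fun h ↦ hz₂ (h ▸ P.mem_part hx₂s)

end Finpartition

section Bounds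

variable {m n t : ℕ} {π : Finpartition (Icc 1 (m * n))}

theorem IsNCPart.le_card_parts (h : IsNCPart m n t π) (htmn : t ≤ m * n) : t ≤ #π.parts := by
  have hsub : Icc 1 t ⊆ Icc 1 (m * n) := Icc_subset_Icc_right htmn
  calc t = #(Icc 1 t) := by simp
    _ ≤ #π.parts := card_le_card_of_injOn π.part (fun x hx ↦ π.part_mem.2 (hsub hx))
        fun x hx y hy hxy ↦ card_le_one.1 (h.2.1 _ (π.part_mem.2 (hsub hx))) x
          (mem_inter.2 ⟨π.mem_part (hsub hx), hx⟩) y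
          (mem_inter.2 ⟨hxy ▸ π.mem_part (hsub hy), hy⟩)

theorem IsNCPart.card_parts_le (h : IsNCPart m n t π) (hm : 0 < m) : #π.parts ≤ n := by
  have hle : #π.parts * m ≤ n * m :=
    calc #π.parts * m ≤ ∑ B ∈ π.parts, #B := by
          rw [← smul_eq_mul]
          exact card_nsmul_le_sum _ _ _ fun B hB ↦
            Nat.le_of_dvd (π.nonempty_of_mem_parts hB).card_pos (h.1 B hB)
      _ = n * m := by rw [π.sum_card_parts, Nat.card_Icc, Nat.add_sub_cancel, mul_comm]
  exact Nat.le_of_mul_le_mul_right hle hm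

end Bounds

section Cover

variable {m n t : ℕ}

theorem IsNCPart.mergeParts {π π' : Finpartition (Icc 1 (m * n))} (hπ : IsNCPart m n t π)
    (hπ' : IsNCPart m n t π') (hle : π ≤ π') {B₀ B₁ B₂ : Finset ℕ} (hB₀ : B₀ ∈ π'.parts)
    (hS : {B₁, B₂} ⊆ π.parts) (h12 : B₁ ≠ B₂) (hB₁₀ : B₁ ⊆ B₀) (hB₂₀ : B₂ ⊆ B₀)
    {x₁ x₂ : ℕ} (hx₁ : x₁ ∈ B₁) (hx₂ : x₂ ∈ B₂)
    (hlow : ∀ z ∈ B₀, z ∉ B₁ → z ∉ B₂ → x₁ < z ∧ x₂ < z) :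
    IsNCPart m n t (π.mergeParts {B₁, B₂} hS (insert_nonempty _ _)) := by
  rw [isNCPart_iff] at hπ hπ' ⊢
  obtain ⟨hdvd, hone, hpw⟩ := hπ
  obtain ⟨-, hone', hpw'⟩ := hπ'
  have hB₁ : B₁ ∈ π.parts := hS (mem_insert_self _ _)
  have hB₂ : B₂ ∈ π.parts := hS (mem_insert_of_mem (mem_singleton_self _))
  have hnotMem {B C : Finset ℕ} (hB : B ∈ π.parts) (hC : C ∈ π.parts) (hBC : B ≠ C) {z : ℕ}
      (hz : z ∈ C) : z ∉ B := fun hzB ↦ hBC (π.eq_of_mem_parts hB hC hzB hz)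
  have hpos {B : Finset ℕ} (hB : B ∈ π.parts) {z : ℕ} (hz : z ∈ B) : 0 < z :=
    (mem_Icc.1 (π.le hB hz)).1
  simp only [Finpartition.parts_mergeParts, sup_insert, sup_singleton, id, sup_eq_union,
    forall_mem_insert, coe_insert, Set.pairwise_insert]
  refine ⟨⟨?_, fun B hB ↦ hdvd B (mem_sdiff.1 hB).1⟩, ⟨?_, fun B hB ↦ hone B (mem_sdiff.1 hB).1⟩,
    hpw.mono (by simp), fun C hC _ ↦ ?_⟩
  · rw [card_union_of_disjoint (s := B₁) (t := B₂) (π.disjoint hB₁ hB₂ h12)]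
    exact dvd_add (hdvd B₁ hB₁) (hdvd B₂ hB₂)
  · exact (card_le_card (inter_subset_inter_right (union_subset hB₁₀ hB₂₀))).trans (hone' B₀ hB₀)
  obtain ⟨hCπ, hC12⟩ := mem_sdiff.1 (mem_coe.1 hC)
  have hC₁ : B₁ ≠ C := fun h ↦ hC12 (h ▸ mem_insert_self _ _)
  have hC₂ : B₂ ≠ C := fun h ↦ hC12 (h ▸ mem_insert_of_mem (mem_singleton_self _))
  by_cases hC₀ : C ⊆ B₀
  · have hCabove {z : ℕ} (hz : z ∈ C) :=
      hlow z (hC₀ hz) (hnotMem hB₁ hCπ hC₁ hz) (hnotMem hB₂ hCπ hC₂ hz)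
    exact not_crosses_union hx₁ hx₂ (hpos hB₁ hx₁) (hpos hB₂ hx₂) (fun _ hz ↦ (hCabove hz).1)
      (fun _ hz ↦ (hCabove hz).2) (hone B₁ hB₁) (hone B₂ hB₂) (hpw hB₁ hCπ hC₁)
      (hpw hB₂ hCπ hC₂)
  · -- `C` lies in a part `D ≠ B₀` of `π'`, so a crossing with `B₁ ∪ B₂ ⊆ B₀` would be one in `π'`.
    obtain ⟨D, hD, hCD⟩ := hle hCπ
    have hD₀ : B₀ ≠ D := by rintro rfl; exact hC₀ hCD
    exact ⟨fun h ↦ hpw' hB₀ hD hD₀ (h.mono (union_subset hB₁₀ hB₂₀) hCD),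
      fun h ↦ hpw' hD hB₀ hD₀.symm (h.mono hCD (union_subset hB₁₀ hB₂₀))⟩

theorem NCP.card_parts_eq_of_covBy {π π' : NCP m n t} (h : π ⋖ π') :
    #π.1.parts = #π'.1.parts + 1 := by
  obtain ⟨B₀, hB₀, B₁, hB₁, B₂, hB₂, h12, hB₁₀, hB₂₀, x₁, hx₁, x₂, hx₂, hlow⟩ :=
    Finpartition.exists_two_lowest_parts_of_lt (Subtype.coe_lt_coe.2 h.lt)
  have hS : {B₁, B₂} ⊆ π.1.parts := insert_subset hB₁ (singleton_subset_iff.2 hB₂)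
  have hNC := π.2.mergeParts π'.2 h.le hB₀ hS h12 hB₁₀ hB₂₀ hx₁ hx₂ hlow
  set σ := π.1.mergeParts {B₁, B₂} hS (insert_nonempty _ _)
  have hcard : #σ.parts + 2 = #π.1.parts + 1 := by
    rw [← card_pair h12]
    exact Finpartition.card_mergeParts
  have hπσ : π.1 < σ := lt_of_le_of_ne Finpartition.le_mergeParts fun h ↦ by
    rw [← h] at hcard
    omega
  have hσπ' : σ = π'.1 := (Finpartition.mergeParts_le h.le hB₀ (by simp [hB₁₀, hB₂₀])).eq_of_not_lt
    fun hlt ↦ h.2 (c := ⟨σ, hNC⟩) hπσ hlt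
  rw [← hσπ']
  omega

end Cover

theorem exists_lt_mem_Ioc {c : ℕ → ℕ} {x : ℕ} (h0 : c 0 < x) :
    ∀ {r : ℕ}, x ≤ c r → ∃ i < r, x ∈ Ioc (c i) (c (i + 1))
  | 0, hr => absurd hr (not_le.2 h0)
  | r + 1, hr => by
    by_cases hxr : x ≤ c r
    · obtain ⟨i, hi, hx⟩ := exists_lt_mem_Ioc h0 hxr
      exact ⟨i, hi.trans r.lt_succ_self, hx⟩
    · exact ⟨r, r.lt_succ_self, mem_Ioc.2 ⟨not_le.1 hxr, hr⟩⟩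

def combBlock (t : ℕ) (c : ℕ → ℕ) (i : ℕ) : Finset ℕ :=
  (if i < t then {i + 1} else ∅) ∪ Ioc (c i) (c (i + 1))

section Comb

variable {t : ℕ} {c : ℕ → ℕ}

theorem mem_combBlock {i x : ℕ} :
    x ∈ combBlock t c i ↔ i < t ∧ x = i + 1 ∨ c i < x ∧ x ≤ c (i + 1) := by
  unfold combBlock
  split_ifs <;> simp [*]

theorem card_combBlock (hc : Monotone c) (hc0 : t ≤ c 0) (i : ℕ) :
    #(combBlock t c i) = c (i + 1) - c i + if i < t then 1 else 0 := by
  have := hc (Nat.zero_le i)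
  unfold combBlock
  split_ifs with hi
  · rw [card_union_of_disjoint (by simp; omega), card_singleton, Nat.card_Ioc, add_comm]
  · simp

theorem disjoint_combBlock (hc : Monotone c) (hc0 : t ≤ c 0) {i j : ℕ} (hij : i ≠ j) :
    Disjoint (combBlock t c i) (combBlock t c j) := by
  have := hc (Nat.zero_le i)
  have := hc (Nat.zero_le j)
  rw [disjoint_left]
  intro x hxi hxj
  rw [mem_combBlock] at hxi hxj
  rcases hij.lt_or_gt with h | h <;>
    have : c (_ + 1) ≤ c _ := hc h <;>
    omega

theorem not_crosses_combBlock (hc : Monotone c) (hc0 : t ≤ c 0) {i j : ℕ} (hij : i ≠ j) :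
    ¬ Crosses t (combBlock t c i) (combBlock t c j) := by
  have := hc (Nat.zero_le i)
  have := hc (Nat.zero_le j)
  rintro ⟨a, b, d, e, hab, hbd, hde, ⟨hb, ha, he, hb', hd⟩ | ⟨hb, ha, hd, hb', he⟩⟩ <;>
    simp only [mem_combBlock] at * <;>
    rcases hij.lt_or_gt with h | h <;>
    have : c (_ + 1) ≤ c _ := hc h <;>
    omega

theorem card_inter_combBlock_le_one (hc : Monotone c) (hc0 : t ≤ c 0) (i : ℕ) :
    #(combBlock t c i ∩ Icc 1 t) ≤ 1 := by
  have := hc (Nat.zero_le i)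
  refine card_le_one.2 fun x hx y hy ↦ ?_
  simp only [mem_inter, mem_combBlock, mem_Icc] at hx hy
  omega

end Comb

theorem exists_finpartition_combBlock {t r N : ℕ} {c : ℕ → ℕ} (hc : Monotone c) (hc0 : c 0 = t)
    (hcr : c r = N) (htr : t ≤ r) (hstrict : ∀ i, t ≤ i → i < r → c i < c (i + 1)) :
    ∃ π : Finpartition (Icc 1 N), π.parts = (range r).image (combBlock t c) ∧ #π.parts = r := by
  have hne (i : ℕ) (hi : i < r) : (combBlock t c i).Nonempty := by
    by_cases hit : i < t
    · exact ⟨i + 1, mem_combBlock.2 (.inl ⟨hit, rfl⟩)⟩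
    · exact ⟨c (i + 1), mem_combBlock.2 (.inr ⟨hstrict i (not_lt.1 hit) hi, le_rfl⟩)⟩
  have hcover (x : ℕ) : (∃ i < r, x ∈ combBlock t c i) ↔ x ∈ Icc 1 N := by
    constructor
    · rintro ⟨i, hi, hx⟩
      have := hc (Nat.zero_le i)
      have : c (i + 1) ≤ c r := hc hi
      have := hc (Nat.zero_le r)
      rw [mem_combBlock] at hx
      rw [mem_Icc]
      omega
    · intro hx
      rw [mem_Icc] at hx
      by_cases hxt : x ≤ t
      · exact ⟨x - 1, by omega, mem_combBlock.2 (.inl ⟨by omega, by omega⟩)⟩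
      · obtain ⟨i, hi, hxi⟩ := exists_lt_mem_Ioc (by omega) (hcr ▸ hx.2)
        exact ⟨i, hi, mem_combBlock.2 (.inr (mem_Ioc.1 hxi))⟩
  have hdisj {i j : ℕ} (hij : combBlock t c i ≠ combBlock t c j) :
      Disjoint (combBlock t c i) (combBlock t c j) :=
    disjoint_combBlock hc hc0.ge fun h ↦ hij (h ▸ rfl)
  have hinj : Set.InjOn (combBlock t c) (range r) := fun i _ j hj hij ↦ by
    by_contra h
    have := disjoint_combBlock hc hc0.ge h
    rw [hij, disjoint_self] at this
    exact (hne j (mem_range.1 hj)).ne_empty this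
  refine ⟨.ofExistsUnique ((range r).image (combBlock t c)) ?_ ?_ ?_, rfl, ?_⟩
  · simp only [forall_mem_image, mem_range]
    exact fun i hi x hx ↦ (hcover x).1 ⟨i, hi, hx⟩
  · intro x hx
    obtain ⟨i, hi, hxi⟩ := (hcover x).2 hx
    refine ⟨_, ⟨mem_image_of_mem _ (mem_range.2 hi), hxi⟩, fun B ⟨hB, hxB⟩ ↦ ?_⟩
    obtain ⟨j, -, rfl⟩ := mem_image.1 hB
    by_contra h
    exact disjoint_left.1 (hdisj h) hxB hxi
  · rintro h
    obtain ⟨i, hi, hi0⟩ := mem_image.1 h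
    exact (hne i (mem_range.1 hi)).ne_empty hi0
  · rw [Finpartition.ofExistsUnique_parts, card_image_of_injOn hinj, card_range]

theorem exists_isNCPart_card_eq {m n t r : ℕ} (hm : 0 < m) (hr : 0 < r) (htr : t ≤ r)
    (hrn : r ≤ n) : ∃ π : Finpartition (Icc 1 (m * n)), IsNCPart m n t π ∧ #π.parts = r := by
  -- cut points `c i = m * i + (t - i)` make every block `combBlock t c i` with `i + 1 < r`
  -- of size `m`; the last block takes up the rest, `m * (n - r + 1)` elements
  set c : ℕ → ℕ := fun i ↦ if i < r then m * i + (t - i) else m * n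
  have hc0 : c 0 = t := by simp [c, hr]
  have hc_lt (i : ℕ) (hi : i < r) : c i = m * i + (t - i) := if_pos hi
  have hc_ge (i : ℕ) (hi : r ≤ i) : c i = m * n := if_neg (not_lt.2 hi)
  have hstep (i : ℕ) (hi : i < r) : c i ≤ c (i + 1) ∧
      ∃ k, 0 < k ∧ c (i + 1) - c i + (if i < t then 1 else 0) = m * k := by
    rw [hc_lt i hi]
    rcases (Nat.succ_le_of_lt hi).lt_or_eq with hi' | hi'
    · have : m * (i + 1) = m * i + m := by ring
      rw [hc_lt (i + 1) hi']
      refine ⟨by omega, 1, one_pos, ?_⟩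
      split_ifs <;> omega
    · have hsplit : m * n = m * i + m * (n - i) := by rw [← mul_add]; congr; omega
      have : n - i ≤ m * (n - i) := Nat.le_mul_of_pos_left _ hm
      rw [hc_ge (i + 1) hi'.ge]
      refine ⟨by omega, n - i, by omega, ?_⟩
      split_ifs <;> omega
  have hc : Monotone c := monotone_nat_of_le_succ fun i ↦ by
    by_cases hi : i < r
    · exact (hstep i hi).1
    · rw [hc_ge i (not_lt.1 hi), hc_ge (i + 1) (by omega)]
  obtain ⟨π, hparts, hcard⟩ := exists_finpartition_combBlock hc hc0
    (hc_ge r le_rfl) htr fun i hti hi ↦ by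
      obtain ⟨-, k, hk, hsize⟩ := hstep i hi
      rw [if_neg (not_lt.2 hti)] at hsize
      have := Nat.mul_pos hm hk
      omega
  refine ⟨π, isNCPart_iff.2 ⟨?_, ?_, ?_⟩, hcard⟩ <;> rw [hparts]
  · simp only [forall_mem_image, mem_range]
    intro i hi
    obtain ⟨-, k, -, hsize⟩ := hstep i hi
    rw [card_combBlock hc hc0.ge, hsize]
    exact dvd_mul_right m k
  · simp only [forall_mem_image]
    exact fun i _ ↦ card_inter_combBlock_le_one hc hc0.ge i
  · rw [coe_image]
    rintro _ ⟨i, -, rfl⟩ _ ⟨j, -, rfl⟩ hij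
    exact not_crosses_combBlock hc hc0.ge fun h ↦ hij (h ▸ rfl)

/-- The poset of `m`-divisible non-crossing `t`-partitions of `[mn]` under
refinement is graded of rank `n − t`, the rank of `π` being `n` minus the
number of blocks of `π`: every element has between `t` and `n` blocks (so the
rank lies between `0` and `n − t`), both extremes are attained (in particular
the minimum possible number of blocks is `t`), and along every cover relation
the number of blocks drops by exactly one (so the rank increases by one). -/
theorem ncp_graded (m n t : ℕ) (hm : 1 ≤ m) (hn : 1 ≤ n) (ht : 1 ≤ t) (htn : t ≤ n) :
    (∀ π : NCP m n t, t ≤ (π.1).parts.card ∧ (π.1).parts.card ≤ n) ∧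
    (∃ π : NCP m n t, (π.1).parts.card = t) ∧
    (∃ π : NCP m n t, (π.1).parts.card = n) ∧
    (∀ π π' : NCP m n t, π ⋖ π' → (π.1).parts.card = (π'.1).parts.card + 1) := by
  refine ⟨fun π ↦ ⟨π.2.le_card_parts (htn.trans (Nat.le_mul_of_pos_left n hm)),
    π.2.card_parts_le hm⟩, ?_, ?_, fun _ _ ↦ NCP.card_parts_eq_of_covBy⟩
  · obtain ⟨π, hπ, hcard⟩ := exists_isNCPart_card_eq hm ht le_rfl htn
    exact ⟨⟨π, hπ⟩, hcard⟩
  · obtain ⟨π, hπ, hcard⟩ := exists_isNCPart_card_eq hm hn htn le_rfl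
    exact ⟨⟨π, hπ⟩, hcard⟩
end

section
/- For positive integers n,t with t ≤ n, and for 0 ≤ a, 0 ≤ b with a+b ≤ n−t, the following binomial identity holds: C(mn+a−1,a)·C(n−1,n−t−a−b) − m·C(mn+a−1,a−1)·C(n,n−t−a−b) = C(mn+a−1,a)·C(n,t+a+b)·(t+b)/n. In particular, this quantity is a nonnegative integer. -/
/-!
Put `k = t + a + b`. The absorption identities `n·C(n−1, n−k) = k·C(n, k)` and
`mn·C(mn+a−1, a−1) = a·C(mn+a−1, a)` turn both terms of the left side into multiples of
`C(mn+a−1, a)·C(n, k)/n`, with coefficients `k` and `a`; their difference `k − a = t + b` gives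
the right side. The left side is an integer difference and the right side is visibly
nonnegative, so the quantity is a natural number.
-/

theorem Nat.mul_choose_sub_one_sub {n k : ℕ} (hkn : k ≤ n) :
    n * (n - 1).choose (n - k) = k * n.choose k := by
  rcases n with _ | n
  · simp [Nat.le_zero.mp hkn]
  · rw [Nat.add_sub_cancel, Nat.mul_comm, Nat.choose_mul_succ_eq, Nat.sub_sub_self hkn,
      Nat.choose_symm hkn, Nat.mul_comm]

theorem Nat.mul_ite_choose_sub_one (p a : ℕ) :
    p * (if a = 0 then 0 else (p + a - 1).choose (a - 1)) = a * (p + a - 1).choose a := by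
  rcases a with _ | a
  · simp
  · have h := Nat.choose_succ_right_eq (p + a) a
    rw [Nat.add_sub_cancel] at h
    rw [if_neg a.succ_ne_zero, ← Nat.add_assoc, Nat.add_sub_cancel, Nat.add_sub_cancel,
      Nat.mul_comm, ← h, Nat.mul_comm]

theorem Rat.exists_natCast_eq_of_intCast_eq {q : ℚ} (z : ℤ) (hz : (z : ℚ) = q) (hq : 0 ≤ q) :
    ∃ c : ℕ, (c : ℚ) = q :=
  ⟨z.toNat, by rw [← hz, ← Int.cast_natCast, Int.toNat_of_nonneg (by exact_mod_cast hz ▸ hq)]⟩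

theorem f_triangle_coefficient_eq (m n t a b : ℕ) (ht : 1 ≤ t) (hab : t + a + b ≤ n) :
    ((m * n + a - 1).choose a : ℚ) * ((n - 1).choose (n - t - a - b)) -
        (m : ℚ) * (if a = 0 then 0 else ((m * n + a - 1).choose (a - 1) : ℚ)) *
          (n.choose (n - t - a - b)) =
      ((m * n + a - 1).choose a : ℚ) * (n.choose (t + a + b)) * (((t : ℚ) + b) / n) := by
  have hn : (n : ℚ) ≠ 0 := by norm_cast; omega
  have hsub : n - t - a - b = n - (t + a + b) := by omega
  have hsymm : n.choose (n - (t + a + b)) = n.choose (t + a + b) := Nat.choose_symm (by omega)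
  have hlower : ((n * (n - 1).choose (n - (t + a + b)) : ℕ) : ℚ) =
      ((t + a + b) * n.choose (t + a + b) : ℕ) :=
    congrArg _ (Nat.mul_choose_sub_one_sub hab)
  have hupper : ((m * n * (if a = 0 then 0 else (m * n + a - 1).choose (a - 1)) : ℕ) : ℚ) =
      (a * (m * n + a - 1).choose a : ℕ) :=
    congrArg _ (Nat.mul_ite_choose_sub_one (m * n) a)
  rw [hsub, hsymm]
  push_cast at hlower hupper ⊢
  field_simp
  linear_combination ((m * n + a - 1).choose a : ℚ) * hlower -
    (n.choose (t + a + b) : ℚ) * hupper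

theorem f_triangle_coefficient_general (m n t a b : ℕ) (ht : 1 ≤ t)
    (hab : t + a + b ≤ n) :
    (((m * n + a - 1).choose a : ℚ) * ((n - 1).choose (n - t - a - b)) -
        (m : ℚ) * (if a = 0 then 0 else ((m * n + a - 1).choose (a - 1) : ℚ)) *
          (n.choose (n - t - a - b)) =
      ((m * n + a - 1).choose a : ℚ) * (n.choose (t + a + b)) * (((t : ℚ) + b) / n)) ∧
    ∃ c : ℕ, (c : ℚ) =
      ((m * n + a - 1).choose a : ℚ) * ((n - 1).choose (n - t - a - b)) -
        (m : ℚ) * (if a = 0 then 0 else ((m * n + a - 1).choose (a - 1) : ℚ)) *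
          (n.choose (n - t - a - b)) := by
  have key := f_triangle_coefficient_eq m n t a b ht hab
  refine ⟨key, Rat.exists_natCast_eq_of_intCast_eq
    ((m * n + a - 1).choose a * (n - 1).choose (n - t - a - b) -
      m * (if a = 0 then 0 else (m * n + a - 1).choose (a - 1)) * n.choose (n - t - a - b))
    (by push_cast; rfl) (key ▸ by positivity)⟩

/-- The coefficient identity for the `F`-triangle of `m`-divisible non-crossing
`t`-partitions: for `m,n,t ≥ 1`, `t ≤ n`, `a,b ≥ 0` with `a+b ≤ n−t`,
`C(mn+a−1,a)·C(n−1,n−t−a−b) − m·C(mn+a−1,a−1)·C(n,n−t−a−b)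
  = C(mn+a−1,a)·C(n,t+a+b)·(t+b)/n`,
where `C(x,−1) = 0`; in particular this quantity is a nonnegative integer. -/
theorem f_triangle_coefficient (m n t a b : ℕ) (hm : 1 ≤ m) (hn : 1 ≤ n) (ht : 1 ≤ t)
    (htn : t ≤ n) (hab : t + a + b ≤ n) :
    (((m * n + a - 1).choose a : ℚ) * ((n - 1).choose (n - t - a - b)) -
        (m : ℚ) * (if a = 0 then 0 else ((m * n + a - 1).choose (a - 1) : ℚ)) *
          (n.choose (n - t - a - b)) =
      ((m * n + a - 1).choose a : ℚ) * (n.choose (t + a + b)) * (((t : ℚ) + b) / n)) ∧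
    ∃ c : ℕ, (c : ℚ) =
      ((m * n + a - 1).choose a : ℚ) * ((n - 1).choose (n - t - a - b)) -
        (m : ℚ) * (if a = 0 then 0 else ((m * n + a - 1).choose (a - 1) : ℚ)) *
          (n.choose (n - t - a - b)) :=
  f_triangle_coefficient_general m n t a b ht hab
end

section
/- The number of Dyck paths of length 2n that start with at least t up-steps equals (t+1)/(n+1) · C(2n−t, n−t). -/
/-- A Dyck path, encoded as a list of steps (`true` = up-step `(1,1)`,
`false` = down-step `(1,−1)`): it ends on the x-axis and never goes below it. -/
def IsDyckPath (p : List Bool) : Prop :=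
  p.count true = p.count false ∧
  ∀ q : List Bool, q <+: p → q.count false ≤ q.count true

/-!
A path starting with `t` up-steps is `Uᵗ` followed by a path `s` which, started at height `t`,
stays weakly above the axis and ends on it (`IsDyckPathFrom t s`). Splitting such paths by
their first step, their number `D(h, m)` from height `h` with `m` steps satisfies
`D(h+1, m+1) = D(h+2, m) + D(h, m)`, and Pascal's rule then gives the reflection-principle count
`D(h, h + 2k) = C(h+2k, k) - C(h+2k, k-1) = (h+1)/(h+k+1) · C(h+2k, k)`.
-/

namespace List

variable {α : Type*}

instance finite_subtype_and_length_eq [Finite α] (P : List α → Prop) (m : ℕ) :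
    Finite {s : List α // P s ∧ s.length = m} :=
  ((finite_length_eq α m).subset fun _ (hs : _ ∧ _) => hs.2).to_subtype

def subtypeLengthSuccEquivSigma (P : List α → Prop) (m : ℕ) :
    {s : List α // P s ∧ s.length = m + 1} ≃ Σ a : α, {s : List α // P (a :: s) ∧ s.length = m}
    where
  toFun
    | ⟨[], _, hl⟩ => absurd hl (by simp)
    | ⟨a :: s, hP, hl⟩ => ⟨a, s, hP, by simpa using hl⟩
  invFun | ⟨a, s, hP, hl⟩ => ⟨a :: s, hP, by simp [hl]⟩
  left_inv
    | ⟨[], _, hl⟩ => absurd hl (by simp)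
    | ⟨_ :: _, _, _⟩ => rfl
  right_inv | ⟨_, _, _, _⟩ => rfl

theorem forall_prefix_cons_iff (P : List α → Prop) (a : α) (s : List α) :
    (∀ q, q <+: a :: s → P q) ↔ P [] ∧ ∀ q, q <+: s → P (a :: q) := by
  simp only [prefix_cons_iff, or_imp, forall_and, forall_eq, forall_exists_index, and_imp]
  exact and_congr_right' ⟨fun h q hq => h _ q rfl hq, fun h _ q hq hs => hq ▸ h q hs⟩

theorem natCard_subtype_length_succ [Fintype α] (P : List α → Prop) (m : ℕ) :
    Nat.card {s : List α // P s ∧ s.length = m + 1} =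
      ∑ a : α, Nat.card {s : List α // P (a :: s) ∧ s.length = m} := by
  rw [Nat.card_congr (subtypeLengthSuccEquivSigma P m), Nat.card_sigma]

def subtypePrefixEquiv (l : List α) (P : List α → Prop) :
    {p : List α // P p ∧ l <+: p} ≃ {s : List α // P (l ++ s)} where
  toFun p := ⟨p.1.drop l.length, by rw [prefix_iff_eq_append.mp p.2.2]; exact p.2.1⟩
  invFun s := ⟨l ++ s.1, s.2, prefix_append l s.1⟩
  left_inv p := Subtype.ext (prefix_iff_eq_append.mp p.2.2)
  right_inv s := Subtype.ext drop_left

end List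

def IsDyckPathFrom : ℕ → List Bool → Prop
  | h, [] => h = 0
  | h, true :: s => IsDyckPathFrom (h + 1) s
  | 0, false :: _ => False
  | h + 1, false :: s => IsDyckPathFrom h s

theorem isDyckPathFrom_iff (h : ℕ) (s : List Bool) :
    IsDyckPathFrom h s ↔ h + s.count true = s.count false ∧
      ∀ q : List Bool, q <+: s → q.count false ≤ h + q.count true := by
  induction s generalizing h with
  | nil => simp [IsDyckPathFrom]
  | cons b s ih =>
    rw [List.forall_prefix_cons_iff]
    match b, h with
    | true, _ => simp +arith [IsDyckPathFrom, ih]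
    | false, _ + 1 => simp +arith [IsDyckPathFrom, ih]
    | false, 0 => exact iff_of_false id fun ⟨_, _, hq⟩ => by simpa using hq [] List.nil_prefix

theorem isDyckPath_iff_isDyckPathFrom_zero (p : List Bool) :
    IsDyckPath p ↔ IsDyckPathFrom 0 p := by
  simp [isDyckPathFrom_iff, IsDyckPath]

theorem isDyckPathFrom_replicate_append (h t : ℕ) (s : List Bool) :
    IsDyckPathFrom h (List.replicate t true ++ s) ↔ IsDyckPathFrom (h + t) s := by
  induction t generalizing h with
  | zero => rfl
  | succ t ih => simp only [List.replicate_succ, List.cons_append, IsDyckPathFrom, ih]; ring_nf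

theorem IsDyckPathFrom.le_length {h : ℕ} {s : List Bool} (hs : IsDyckPathFrom h s) :
    h ≤ s.length := by
  induction s generalizing h with
  | nil => exact hs.le
  | cons b s ih =>
    match b, h, hs with
    | true, _, hs => exact Nat.le_succ_of_le (Nat.le_of_succ_le (ih hs))
    | false, _ + 1, hs => exact Nat.succ_le_succ (ih hs)

noncomputable def dyckCountFrom (h m : ℕ) : ℕ :=
  Nat.card {s : List Bool // IsDyckPathFrom h s ∧ s.length = m}

theorem dyckCountFrom_zero_zero : dyckCountFrom 0 0 = 1 :=
  Nat.card_eq_one_iff_exists.mpr ⟨⟨[], rfl, rfl⟩, fun ⟨s, _, hs⟩ => by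
    simp [List.length_eq_zero_iff.mp hs]⟩

theorem dyckCountFrom_eq_zero_of_lt {h m : ℕ} (hm : m < h) : dyckCountFrom h m = 0 :=
  have : IsEmpty {s : List Bool // IsDyckPathFrom h s ∧ s.length = m} :=
    ⟨fun ⟨_, hs, hl⟩ => (hs.le_length.trans_eq hl).not_gt hm⟩
  Nat.card_of_isEmpty

theorem dyckCountFrom_zero_succ (m : ℕ) : dyckCountFrom 0 (m + 1) = dyckCountFrom 1 m := by
  simp [dyckCountFrom, List.natCard_subtype_length_succ, IsDyckPathFrom]

theorem dyckCountFrom_succ_succ (h m : ℕ) :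
    dyckCountFrom (h + 1) (m + 1) = dyckCountFrom (h + 2) m + dyckCountFrom h m := by
  simp [dyckCountFrom, List.natCard_subtype_length_succ, IsDyckPathFrom]

theorem dyckCountFrom_self (h : ℕ) : dyckCountFrom h h = 1 := by
  induction h with
  | zero => exact dyckCountFrom_zero_zero
  | succ h ih => rw [dyckCountFrom_succ_succ, dyckCountFrom_eq_zero_of_lt (by omega), ih]

-- `C(h+2k, h+k+1) = C(h+2k, k-1)`, without the truncated subtraction that breaks `k = 0`.
theorem dyckCountFrom_add_two_mul_add_choose (h k : ℕ) :
    dyckCountFrom h (h + 2 * k) + (h + 2 * k).choose (h + k + 1) = (h + 2 * k).choose k := by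
  induction k generalizing h with
  | zero => simp [dyckCountFrom_self]
  | succ k ihk =>
    induction h with
    | zero =>
      have h1 := ihk 1
      rw [show 0 + 2 * (k + 1) = 1 + 2 * k + 1 by ring, dyckCountFrom_zero_succ,
        Nat.choose_succ_succ', Nat.choose_succ_succ']
      ring_nf at h1 ⊢
      omega
    | succ h ih =>
      have h1 := ihk (h + 2)
      rw [show h + 1 + 2 * (k + 1) = h + 2 + 2 * k + 1 by ring, dyckCountFrom_succ_succ,
        Nat.choose_succ_succ', Nat.choose_succ_succ']
      ring_nf at h1 ih ⊢
      omega

theorem dyckCountFrom_add_two_mul (h k : ℕ) :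
    (dyckCountFrom h (h + 2 * k) : ℚ) = (h + 1) / (h + k + 1) * (h + 2 * k).choose k := by
  have hsum : (dyckCountFrom h (h + 2 * k) : ℚ) + (h + 2 * k).choose (h + k + 1) =
      (h + 2 * k).choose k := mod_cast dyckCountFrom_add_two_mul_add_choose h k
  have hratio : ((h + 2 * k).choose (h + k + 1) : ℚ) * (h + k + 1) =
      (h + 2 * k).choose k * k := by
    have := Nat.choose_succ_right_eq (h + 2 * k) (h + k)
    rw [show h + 2 * k = h + k + k by ring, Nat.choose_symm_add, Nat.add_sub_cancel_left] at this
    rw [show h + 2 * k = h + k + k by ring]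
    exact_mod_cast this
  field_simp
  linear_combination (h + k + 1 : ℚ) * hsum - hratio

/-- The number of Dyck paths of length `2n` that start with (at least) `t`
up-steps equals `(t+1)/(n+1) · C(2n−t, n−t)`. -/
theorem tDyck_count (n t : ℕ) (htn : t ≤ n) :
    (Nat.card {p : List Bool //
        IsDyckPath p ∧ p.length = 2 * n ∧ List.replicate t true <+: p} : ℚ) =
      ((t : ℚ) + 1) / ((n : ℚ) + 1) * ((2 * n - t).choose (n - t)) := by
  have hlen : 2 * n - t = t + 2 * (n - t) := by omega
  have hcard : Nat.card {p : List Bool //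
      IsDyckPath p ∧ p.length = 2 * n ∧ List.replicate t true <+: p} =
        dyckCountFrom t (2 * n - t) := by
    refine Nat.card_congr (((Equiv.subtypeEquivRight fun p => and_assoc.symm).trans
      (List.subtypePrefixEquiv _ _)).trans (Equiv.subtypeEquivRight fun s => ?_))
    rw [isDyckPath_iff_isDyckPathFrom_zero, isDyckPathFrom_replicate_append, zero_add,
      List.length_append, List.length_replicate]
    exact and_congr_right' (by omega)
  rw [hcard, hlen, dyckCountFrom_add_two_mul, Nat.cast_sub htn]
  ring
end

section
/- The set of t-Dyck paths of length 2n is in bijection with the set of filters of the poset T_{n,t} = {(i,j) : 1 ≤ i < j ≤ n, j > t} ordered by (i,j) ⪯ (k,l) iff i ≥ k and j ≤ l; in particular these two sets have the same cardinality. -/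
/-- Membership in the poset `T_{n,t} = {(i,j) : 1 ≤ i < j ≤ n, j > t}`. -/
def MemTnt (n t : ℕ) (x : ℕ × ℕ) : Prop :=
  1 ≤ x.1 ∧ x.1 < x.2 ∧ x.2 ≤ n ∧ t < x.2

/-- `F` is a filter of the poset `T_{n,t}`, ordered by
`(i,j) ⪯ (k,l) ↔ i ≥ k ∧ j ≤ l`: an upward-closed subset of `T_{n,t}`. -/
def IsTntFilter (n t : ℕ) (F : Set (ℕ × ℕ)) : Prop :=
  (∀ x ∈ F, MemTnt n t x) ∧
  ∀ x ∈ F, ∀ y : ℕ × ℕ, MemTnt n t y → y.1 ≤ x.1 → x.2 ≤ y.2 → y ∈ F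

/-! A `t`-Dyck path with `n` up-steps is encoded by the sequence `a j` = number of down-steps
before its `(j+1)`-st up-step: `a` is weakly increasing, `a j ≤ j` is the Dyck condition, and
`a j = 0` for `j < t` says that the path starts with `t` up-steps. A filter of `T_{n,t}` is
determined by its column heights, column `j + 1` being `{(i, j + 1) : 1 ≤ i ≤ a j}`; upward
closure says exactly that the heights increase weakly, and membership in `T_{n,t}` forces
`a j ≤ j` and `a j = 0` for `j < t`. So both sets are in bijection with the same sequences. -/

namespace TDyck

/-- `downsBefore p j` is the number of down-steps of `p` before its `(j+1)`-st up-step, and the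
total number of down-steps once `p` has at most `j` up-steps. -/
def downsBefore : List Bool → ℕ → ℕ
  | [], _ => 0
  | true :: _, 0 => 0
  | true :: p, j + 1 => downsBefore p j
  | false :: p, j => downsBefore p j + 1

lemma downsBefore_replicate_false_append (k : ℕ) (p : List Bool) (j : ℕ) :
    downsBefore (List.replicate k false ++ p) j = k + downsBefore p j := by
  induction k with
  | zero => simp
  | succ k ih => simp only [List.replicate_succ, List.cons_append, downsBefore, ih]; omega

lemma downsBefore_le_succ (p : List Bool) (j : ℕ) : downsBefore p j ≤ downsBefore p (j + 1) := by
  induction p generalizing j with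
  | nil => simp [downsBefore]
  | cons b p ih =>
    cases b with
    | true => cases j <;> simp [downsBefore, ih]
    | false => simpa [downsBefore] using ih j

lemma downsBefore_mono (p : List Bool) : Monotone (downsBefore p) :=
  monotone_nat_of_le_succ (downsBefore_le_succ p)

lemma downsBefore_of_count_true_le {p : List Bool} {j : ℕ} (h : p.count true ≤ j) :
    downsBefore p j = p.count false := by
  induction p generalizing j with
  | nil => simp [downsBefore]
  | cons b p ih =>
    cases b with
    | true =>
      obtain ⟨j, rfl⟩ : ∃ i, j = i + 1 := ⟨j - 1, by simp at h; omega⟩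
      simpa [downsBefore] using ih (by simpa using h)
    | false => simpa [downsBefore] using ih (by simpa using h)

lemma count_false_le_downsBefore_of_prefix {p q : List Bool} (h : q <+: p) :
    q.count false ≤ downsBefore p (q.count true) := by
  induction p generalizing q with
  | nil => simp [List.prefix_nil.mp h]
  | cons b p ih =>
    rcases q with _ | ⟨c, q⟩
    · simp
    · obtain ⟨rfl, hq⟩ : c = b ∧ q <+: p := by simpa [List.cons_prefix_cons] using h
      cases c <;> simpa [downsBefore] using ih hq

lemma exists_prefix_count_eq_downsBefore {p : List Bool} {j : ℕ} (hj : j ≤ p.count true) :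
    ∃ q, q <+: p ∧ q.count true = j ∧ q.count false = downsBefore p j := by
  induction p generalizing j with
  | nil => exact ⟨[], List.prefix_rfl, by simp at hj; simp [hj], by simp [downsBefore]⟩
  | cons b p ih =>
    cases b with
    | false =>
      obtain ⟨q, hq, hqt, hqf⟩ := ih (by simpa using hj)
      exact ⟨false :: q, by simpa [List.cons_prefix_cons] using hq, by simpa using hqt,
        by simp [downsBefore, hqf]⟩
    | true =>
      cases j with
      | zero => exact ⟨[], List.nil_prefix, rfl, by simp [downsBefore]⟩
      | succ j =>
        obtain ⟨q, hq, hqt, hqf⟩ := ih (by simpa using hj)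
        exact ⟨true :: q, by simpa [List.cons_prefix_cons] using hq, by simp [hqt],
          by simp [downsBefore, hqf]⟩

lemma eq_of_downsBefore_eq {p q : List Bool} (hc : p.count true = q.count true)
    (h : downsBefore p = downsBefore q) : p = q := by
  induction p generalizing q with
  | nil =>
    have hf : q.count false = 0 := by
      rw [← downsBefore_of_count_true_le (j := 0) (by simp at hc; omega), ← h]; rfl
    simpa [← List.length_eq_zero_iff, ← List.count_true_add_count_false] using ⟨hc.symm, hf⟩
  | cons b p ih =>
    have h0 := congrFun h 0
    rcases q with _ | ⟨c, q⟩
    · cases b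
      · simp [downsBefore] at h0
      · simp at hc
    · cases b <;> cases c
      · refine congrArg _ (ih (by simpa using hc) (funext fun j => ?_))
        simpa [downsBefore] using congrFun h j
      · simp [downsBefore] at h0
      · simp [downsBefore] at h0
      · refine congrArg _ (ih (by simpa using hc) (funext fun j => ?_))
        simpa [downsBefore] using congrFun h (j + 1)

lemma replicate_true_prefix_iff {p : List Bool} {t : ℕ} (ht : t ≤ p.count true) :
    List.replicate t true <+: p ↔ ∀ j < t, downsBefore p j = 0 := by
  induction t generalizing p with
  | zero => simp
  | succ t ih =>
    rcases p with _ | ⟨b, p⟩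
    · simp at ht
    · cases b
      · simpa [List.replicate_succ, List.cons_prefix_cons, downsBefore] using ⟨0, Nat.zero_le t⟩
      · rw [List.replicate_succ, List.cons_prefix_cons, ih (by simpa using ht),
          Nat.forall_lt_succ_left]
        simp [downsBefore]

def ofDownsBefore : (ℕ → ℕ) → ℕ → List Bool
  | a, 0 => List.replicate (a 0) false
  | a, k + 1 => List.replicate (a 0) false ++ true :: ofDownsBefore (fun j => a (j + 1) - a 0) k

lemma count_true_ofDownsBefore (a : ℕ → ℕ) (n : ℕ) : (ofDownsBefore a n).count true = n := by
  induction n generalizing a with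
  | zero => simp [ofDownsBefore, List.count_replicate]
  | succ k ih => simp [ofDownsBefore, List.count_replicate, ih]

lemma downsBefore_ofDownsBefore {a : ℕ → ℕ} {n : ℕ} (ha : Monotone a)
    (hn : ∀ j, n ≤ j → a j = a n) : downsBefore (ofDownsBefore a n) = a := by
  induction n generalizing a with
  | zero =>
    funext j
    simpa [ofDownsBefore, downsBefore, hn j] using downsBefore_replicate_false_append (a 0) [] j
  | succ k ih =>
    have hmono : Monotone fun j => a (j + 1) - a 0 :=
      fun i j hij => Nat.sub_le_sub_right (ha (by omega)) _
    have hconst : ∀ j, k ≤ j → a (j + 1) - a 0 = a (k + 1) - a 0 :=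
      fun j hj => by rw [hn (j + 1) (by omega)]
    funext j
    rw [ofDownsBefore, downsBefore_replicate_false_append]
    cases j with
    | zero => simp [downsBefore]
    | succ j =>
      simp only [downsBefore, ih hmono hconst]
      have := ha (Nat.zero_le (j + 1))
      omega

/-- The sequences `downsBefore p` of the `t`-Dyck paths `p` of length `2n`. -/
def IsBallotSeq (n t : ℕ) (a : ℕ → ℕ) : Prop :=
  Monotone a ∧ (∀ j, a j ≤ j) ∧ (∀ j, n ≤ j → a j = n) ∧ ∀ j < t, a j = 0

lemma isTDyckPath_iff {n t : ℕ} (htn : t ≤ n) (p : List Bool) :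
    (IsDyckPath p ∧ p.length = 2 * n ∧ List.replicate t true <+: p) ↔
      p.count true = n ∧ IsBallotSeq n t (downsBefore p) := by
  have hlen := List.count_true_add_count_false p
  constructor
  · rintro ⟨⟨hcount, hprefix⟩, hlength, hrep⟩
    have htrue : p.count true = n := by omega
    have hdown : ∀ j, n ≤ j → downsBefore p j = n := fun j hj => by
      rw [downsBefore_of_count_true_le (j := j) (by omega)]; omega
    refine ⟨htrue, downsBefore_mono p, fun j => ?_, hdown,
      (replicate_true_prefix_iff (by omega)).1 hrep⟩
    rcases le_or_gt j n with hj | hj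
    · obtain ⟨q, hq, hqt, hqf⟩ := exists_prefix_count_eq_downsBefore (p := p) (j := j) (by omega)
      rw [← hqf, ← hqt]
      exact hprefix q hq
    · rw [hdown j hj.le]; exact hj.le
  · rintro ⟨htrue, -, hle, hdown, hzero⟩
    have hfalse : p.count false = n := by
      rw [← downsBefore_of_count_true_le htrue.le, hdown n le_rfl]
    refine ⟨⟨by omega, fun q hq => ?_⟩, by omega, (replicate_true_prefix_iff (by omega)).2 hzero⟩
    exact (count_false_le_downsBefore_of_prefix hq).trans (hle _)

noncomputable def tDyckPathEquivBallotSeq {n t : ℕ} (htn : t ≤ n) :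
    {p : List Bool // IsDyckPath p ∧ p.length = 2 * n ∧ List.replicate t true <+: p} ≃
      {a : ℕ → ℕ // IsBallotSeq n t a} :=
  Equiv.ofBijective (fun p => ⟨downsBefore p.1, ((isTDyckPath_iff htn p.1).1 p.2).2⟩) <| by
    constructor
    · rintro ⟨p, hp⟩ ⟨q, hq⟩ h
      rw [isTDyckPath_iff htn] at hp hq
      exact Subtype.ext (eq_of_downsBefore_eq (hp.1.trans hq.1.symm) (congrArg Subtype.val h))
    · rintro ⟨a, ha⟩
      have hdown : downsBefore (ofDownsBefore a n) = a :=
        downsBefore_ofDownsBefore ha.1 fun j hj => by rw [ha.2.2.1 j hj, ha.2.2.1 n le_rfl]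
      refine ⟨⟨ofDownsBefore a n, (isTDyckPath_iff htn _).2 ?_⟩, Subtype.ext hdown⟩
      rw [hdown]
      exact ⟨count_true_ofDownsBefore a n, ha⟩

def filterOfSeq (n t : ℕ) (a : ℕ → ℕ) : Set (ℕ × ℕ) :=
  {x | MemTnt n t x ∧ x.1 ≤ a (x.2 - 1)}

open Classical in
noncomputable def seqOfFilter (n : ℕ) (F : Set (ℕ × ℕ)) (j : ℕ) : ℕ :=
  if j < n then Nat.findGreatest (fun i => (i, j + 1) ∈ F) j else n

lemma isTntFilter_filterOfSeq {n t : ℕ} {a : ℕ → ℕ} (ha : Monotone a) :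
    IsTntFilter n t (filterOfSeq n t a) :=
  ⟨fun _ hx => hx.1, fun _ hx _ hy hyx hxy =>
    ⟨hy, hyx.trans (hx.2.trans (ha (Nat.sub_le_sub_right hxy 1)))⟩⟩

lemma filterOfSeq_injOn {n t : ℕ} {a b : ℕ → ℕ} (ha : IsBallotSeq n t a)
    (hb : IsBallotSeq n t b) (h : filterOfSeq n t a = filterOfSeq n t b) : a = b := by
  have hle : ∀ {a b}, IsBallotSeq n t a → filterOfSeq n t a = filterOfSeq n t b →
      ∀ j, t ≤ j → j < n → a j ≤ b j := by
    intro a b ha h j htj hjn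
    rcases Nat.eq_zero_or_pos (a j) with h0 | h0
    · omega
    · have hmem : (a j, j + 1) ∈ filterOfSeq n t a :=
        ⟨⟨h0, Nat.lt_succ_of_le (ha.2.1 j), hjn, Nat.lt_succ_of_le htj⟩, le_rfl⟩
      exact (h ▸ hmem).2
  funext j
  rcases lt_or_ge j t with hjt | htj
  · rw [ha.2.2.2 j hjt, hb.2.2.2 j hjt]
  rcases lt_or_ge j n with hjn | hnj
  · exact (hle ha h j htj hjn).antisymm (hle hb h.symm j htj hjn)
  · rw [ha.2.2.1 j hnj, hb.2.2.1 j hnj]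

lemma isBallotSeq_seqOfFilter {n t : ℕ} (htn : t ≤ n) {F : Set (ℕ × ℕ)}
    (hF : IsTntFilter n t F) : IsBallotSeq n t (seqOfFilter n F) := by
  classical
  refine ⟨monotone_nat_of_le_succ fun j => ?_, fun j => ?_, fun j hj => if_neg (by omega),
    fun j hj => ?_⟩
  · unfold seqOfFilter
    by_cases hj : j + 1 < n
    · rw [if_pos (by omega), if_pos hj]
      refine Nat.findGreatest_mono (fun i hi => ?_) (Nat.le_succ j)
      obtain ⟨hi1, hij, -, htj⟩ := hF.1 _ hi
      dsimp only at hij htj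
      exact hF.2 _ hi _ ⟨hi1, by dsimp only; omega, hj, by dsimp only; omega⟩ le_rfl (Nat.le_succ _)
    · rw [if_neg hj]
      split_ifs
      · exact (Nat.findGreatest_le j).trans (by omega)
      · exact le_rfl
  · unfold seqOfFilter
    split_ifs with hj
    · exact Nat.findGreatest_le j
    · omega
  · rw [seqOfFilter, if_pos (by omega), Nat.findGreatest_eq_zero_iff]
    intro i _ _ hi
    have := (hF.1 _ hi).2.2.2
    simp only at this
    omega

lemma filterOfSeq_seqOfFilter {n t : ℕ} {F : Set (ℕ × ℕ)} (hF : IsTntFilter n t F) :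
    filterOfSeq n t (seqOfFilter n F) = F := by
  classical
  ext ⟨i, j⟩
  simp only [filterOfSeq, Set.mem_ofPred_eq]
  constructor
  · rintro ⟨hx, hle⟩
    obtain ⟨hi, hij, hjn, -⟩ := id hx
    obtain ⟨k, rfl⟩ : ∃ k, j = k + 1 := ⟨j - 1, by dsimp only at hij; omega⟩
    dsimp only at hi hij hjn hle
    rw [Nat.add_sub_cancel, seqOfFilter, if_pos (by omega)] at hle
    set m := Nat.findGreatest (fun i => (i, k + 1) ∈ F) k with hm
    have hcol : (m, k + 1) ∈ F := Nat.findGreatest_of_ne_zero hm.symm (by omega)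
    exact hF.2 _ hcol _ hx hle le_rfl
  · intro hx
    refine ⟨hF.1 _ hx, ?_⟩
    obtain ⟨-, hij, hjn, -⟩ := hF.1 _ hx
    obtain ⟨k, rfl⟩ : ∃ k, j = k + 1 := ⟨j - 1, by dsimp only at hij; omega⟩
    dsimp only at hij hjn ⊢
    rw [Nat.add_sub_cancel, seqOfFilter, if_pos (by omega)]
    exact Nat.le_findGreatest (by omega) hx

noncomputable def ballotSeqEquivFilter {n t : ℕ} (htn : t ≤ n) :
    {a : ℕ → ℕ // IsBallotSeq n t a} ≃ {F : Set (ℕ × ℕ) // IsTntFilter n t F} :=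
  Equiv.ofBijective (fun a => ⟨filterOfSeq n t a.1, isTntFilter_filterOfSeq a.2.1⟩)
    ⟨fun a b h => Subtype.ext (filterOfSeq_injOn a.2 b.2 (congrArg Subtype.val h)),
      fun F => ⟨⟨seqOfFilter n F.1, isBallotSeq_seqOfFilter htn F.2⟩,
        Subtype.ext (filterOfSeq_seqOfFilter F.2)⟩⟩

end TDyck

theorem tDyck_equiv_filters_general (n t : ℕ) (htn : t ≤ n) :
    Nonempty
      ({p : List Bool //
          IsDyckPath p ∧ p.length = 2 * n ∧ List.replicate t true <+: p} ≃
        {F : Set (ℕ × ℕ) // IsTntFilter n t F}) ∧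
    Nat.card {p : List Bool //
        IsDyckPath p ∧ p.length = 2 * n ∧ List.replicate t true <+: p} =
      Nat.card {F : Set (ℕ × ℕ) // IsTntFilter n t F} :=
  let e := (TDyck.tDyckPathEquivBallotSeq htn).trans (TDyck.ballotSeqEquivFilter htn)
  ⟨⟨e⟩, Nat.card_congr e⟩

/-- The set of `t`-Dyck paths of length `2n` is in bijection with the set of
filters of the poset `T_{n,t}`; in particular, these sets are equinumerous. -/
theorem tDyck_equiv_filters (n t : ℕ) (ht : 1 ≤ t) (htn : t ≤ n) :
    Nonempty
      ({p : List Bool //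
          IsDyckPath p ∧ p.length = 2 * n ∧ List.replicate t true <+: p} ≃
        {F : Set (ℕ × ℕ) // IsTntFilter n t F}) ∧
    Nat.card {p : List Bool //
        IsDyckPath p ∧ p.length = 2 * n ∧ List.replicate t true <+: p} =
      Nat.card {F : Set (ℕ × ℕ) // IsTntFilter n t F} :=
  tDyck_equiv_filters_general n t htn
end

section
/- For positive integers n,t with t ≤ n, the double sum ∑_{P ∈ D_{n,t}} x^{v(P)} y^{r(P)}, where D_{n,t} is the set of t-Dyck paths of length 2n, v(P) is the number of valleys of P, and r(P) is the number of valleys of P at height 0, equals ∑_{k=0}^{n−t} ∑_{h=0}^{n−t−k} [C(n−t+1,k)·C(t+k+h−2,h) − C(n−t,k−1)·C(t+k+h−1,h)] x^{n−t−k} y^{n−t−k−h}. -/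
/-- The step sequence of a path encoded as `f : Fin N → Bool`
(`true` = up-step, `false` = down-step), extended by `false` beyond `N`. -/
def stepAt {N : ℕ} (f : Fin N → Bool) : ℕ → Bool :=
  fun k => if h : k < N then f ⟨k, h⟩ else false

/-- The number of up-steps among the first `k` steps. -/
def upsBefore (g : ℕ → Bool) (k : ℕ) : ℕ :=
  ((Finset.range k).filter fun i => g i = true).card

/-- `f` encodes a Dyck path of length `N`: every prefix has at least as many
up-steps as down-steps, and up- and down-steps are equinumerous in total. -/
def IsDyckFun {N : ℕ} (f : Fin N → Bool) : Prop :=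
  (∀ k ≤ N, k ≤ 2 * upsBefore (stepAt f) k) ∧ 2 * upsBefore (stepAt f) N = N

instance {N : ℕ} (f : Fin N → Bool) : Decidable (IsDyckFun f) := by
  unfold IsDyckFun; infer_instance

/-- The number of valleys of the path `f` (points preceded by a down-step and
followed by an up-step). -/
def valleys {N : ℕ} (f : Fin N → Bool) : ℕ :=
  ((Finset.Ioo 0 N).filter fun k =>
    stepAt f (k - 1) = false ∧ stepAt f k = true).card

/-- The number of valleys of the path `f` at height `0`. -/
def zeroValleys {N : ℕ} (f : Fin N → Bool) : ℕ :=
  ((Finset.Ioo 0 N).filter fun k =>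
    stepAt f (k - 1) = false ∧ stepAt f k = true ∧
      2 * upsBefore (stepAt f) k = k).card


/-!
A `(t+1)`-Dyck path of length `2n + 2` either continues with an up-step after its first `t + 1`
steps, and then it is a `(t+2)`-Dyck path, or it begins with `U^{t+1} D`; deleting this peak
leaves a `t`-Dyck path of length `2n`. The deleted peak sat on a valley, of height `t`, exactly
when the shorter path goes up after its first `t` steps. Hence the valley polynomials
`V n t = ∑_P x^{v(P)} y^{r(P)}` satisfy
`V (n+1) (t+1) = V (n+1) (t+2) + V n t + (x y^[t = 0] - 1) V n (t+1)`,
with `V (n+1) 0 = V (n+1) 1` and `V n n = 1`. The closed form obeys the same recursion in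
`m = n - t`; on coefficients this amounts to Pascal's rule for each binomial factor.
-/
open Finset

lemma stepAt_of_lt {N k : ℕ} (f : Fin N → Bool) (hk : k < N) : stepAt f k = f ⟨k, hk⟩ :=
  dif_pos hk

lemma stepAt_of_le {N k : ℕ} (f : Fin N → Bool) (hk : N ≤ k) : stepAt f k = false :=
  dif_neg (by omega)

lemma ext_stepAt {N : ℕ} {f g : Fin N → Bool} (h : ∀ k < N, stepAt f k = stepAt g k) : f = g := by
  funext i
  simpa [stepAt_of_lt _ i.2] using h i i.2

lemma upsBefore_succ (s : ℕ → Bool) (k : ℕ) :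
    upsBefore s (k + 1) = upsBefore s k + if s k then 1 else 0 := by
  simp only [upsBefore, card_filter, sum_range_succ]

lemma upsBefore_mono (s : ℕ → Bool) : Monotone (upsBefore s) := fun _ _ hab =>
  card_le_card (filter_subset_filter _ (range_subset_range.2 hab))

lemma upsBefore_of_forall_lt {s : ℕ → Bool} {k : ℕ} (hs : ∀ i < k, s i = true) :
    upsBefore s k = k := by
  rw [upsBefore, filter_true_of_mem fun i hi => hs i (mem_range.1 hi), card_range]

def height (s : ℕ → Bool) (k : ℕ) : ℤ := 2 * upsBefore s k - k

lemma isDyckFun_iff_height {N : ℕ} (f : Fin N → Bool) :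
    IsDyckFun f ↔ (∀ k ≤ N, 0 ≤ height (stepAt f) k) ∧ height (stepAt f) N = 0 := by
  simp only [IsDyckFun, height, sub_nonneg, sub_eq_zero]
  norm_cast

/-- Counts the valleys at the positions `1, …, N - 1` whose height satisfies `P`. -/
def valleyCount (s : ℕ → Bool) (N : ℕ) (P : ℤ → Prop) [DecidablePred P] : ℕ :=
  ∑ k ∈ range (N - 1), if s k = false ∧ s (k + 1) = true ∧ P (height s (k + 1)) then 1 else 0

lemma card_filter_Ioo_zero {N : ℕ} (Q : ℕ → Prop) [DecidablePred Q] :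
    #{k ∈ Ioo 0 N | Q k} = ∑ k ∈ range (N - 1), if Q (k + 1) then 1 else 0 := by
  rw [card_filter, ← Ico_add_one_left_eq_Ioo, sum_Ico_eq_sum_range]
  simp only [zero_add, add_comm 1]

lemma valleys_eq_valleyCount {N : ℕ} (f : Fin N → Bool) :
    valleys f = valleyCount (stepAt f) N fun _ => True := by
  simp only [valleys, valleyCount, card_filter_Ioo_zero, Nat.add_sub_cancel, and_true]

lemma zeroValleys_eq_valleyCount {N : ℕ} (f : Fin N → Bool) :
    zeroValleys f = valleyCount (stepAt f) N (· = 0) := by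
  simp only [zeroValleys, valleyCount, card_filter_Ioo_zero, Nat.add_sub_cancel, height,
    sub_eq_zero]
  norm_cast

def dyckPaths (n t : ℕ) : Finset (Fin (2 * n) → Bool) :=
  univ.filter fun f => IsDyckFun f ∧ ∀ i : Fin (2 * n), (i : ℕ) < t → f i = true

def valleyPoly (n t : ℕ) (x y : ℚ) : ℚ :=
  ∑ f ∈ dyckPaths n t, x ^ valleys f * y ^ zeroValleys f

lemma stepAt_of_mem_dyckPaths {n t : ℕ} {f : Fin (2 * n) → Bool} (hf : f ∈ dyckPaths n t)
    {i : ℕ} (hit : i < t) (hin : i < 2 * n) : stepAt f i = true := by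
  rw [stepAt_of_lt f hin]
  exact (mem_filter.1 hf).2.2 _ hit

lemma filter_dyckPaths_stepAt {n t : ℕ} (ht : t < 2 * n) :
    (dyckPaths n t).filter (fun f => stepAt f t = true) = dyckPaths n (t + 1) := by
  ext f
  simp only [dyckPaths, mem_filter, mem_univ, true_and, stepAt_of_lt f ht]
  constructor
  · rintro ⟨⟨hf, hpre⟩, hlast⟩
    refine ⟨hf, fun i hi => ?_⟩
    rcases Nat.lt_succ_iff_lt_or_eq.1 hi with hi | hi
    · exact hpre i hi
    · exact (Fin.ext hi : i = ⟨t, ht⟩) ▸ hlast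
  · rintro ⟨hf, hpre⟩
    exact ⟨⟨hf, fun i hi => hpre i (by omega)⟩, hpre _ (Nat.lt_succ_self t)⟩

lemma valleyPoly_zero (n : ℕ) (x y : ℚ) : valleyPoly (n + 1) 0 x y = valleyPoly (n + 1) 1 x y := by
  rw [valleyPoly, valleyPoly, ← filter_dyckPaths_stepAt (by omega), filter_true_of_mem]
  intro f hf
  have h1 := (mem_filter.1 hf).2.1.1 1 (by omega)
  rw [upsBefore_succ, upsBefore_of_forall_lt (by simp)] at h1
  by_contra h0
  simp [h0] at h1

def pyramid (n : ℕ) : Fin (2 * n) → Bool := fun i => decide ((i : ℕ) < n)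

lemma stepAt_pyramid (n k : ℕ) : stepAt (pyramid n) k = decide (k < n) := by
  rcases lt_or_ge k (2 * n) with hk | hk
  · rw [stepAt_of_lt _ hk, pyramid]
  · rw [stepAt_of_le _ hk]
    simp only [false_eq_decide_iff, not_lt]
    omega

lemma upsBefore_pyramid (n k : ℕ) : upsBefore (stepAt (pyramid n)) k = min k n := by
  induction k with
  | zero => simp [upsBefore]
  | succ k ih =>
    rw [upsBefore_succ, ih, stepAt_pyramid]
    by_cases hk : k < n <;> (simp [hk]; omega)

lemma valleyCount_pyramid (n : ℕ) (P : ℤ → Prop) [DecidablePred P] :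
    valleyCount (stepAt (pyramid n)) (2 * n) P = 0 := by
  refine sum_eq_zero fun k _ => if_neg ?_
  simp only [stepAt_pyramid, decide_eq_false_iff_not, decide_eq_true_eq, not_and]
  omega

lemma dyckPaths_self (n : ℕ) : dyckPaths n n = {pyramid n} := by
  ext f
  simp only [dyckPaths, mem_filter, mem_univ, true_and, mem_singleton]
  constructor
  · rintro ⟨hf, hpre⟩
    have hn : upsBefore (stepAt f) n = n :=
      upsBefore_of_forall_lt fun j hj => by rw [stepAt_of_lt f (by omega)]; exact hpre _ hj
    refine ext_stepAt fun k hk => ?_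
    rw [stepAt_pyramid]
    rcases lt_or_ge k n with hkn | hkn
    · rw [decide_eq_true hkn, stepAt_of_lt f hk]
      exact hpre _ hkn
    · -- an up-step at `k ≥ n` would be the `(n + 1)`-st up-step of `f`
      rw [decide_eq_false (not_lt.2 hkn)]
      by_contra hup
      have h1 := upsBefore_mono (stepAt f) (show k + 1 ≤ 2 * n by omega)
      have h2 := upsBefore_mono (stepAt f) hkn
      rw [upsBefore_succ, if_pos (by simpa using hup)] at h1
      have htotal := hf.2
      omega
  · rintro rfl
    refine ⟨⟨fun k _ => ?_, ?_⟩, fun i hi => by simp [pyramid, hi]⟩ <;>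
      rw [upsBefore_pyramid] <;> omega

lemma valleyPoly_self (n : ℕ) (x y : ℚ) : valleyPoly n n x y = 1 := by
  rw [valleyPoly, dyckPaths_self, sum_singleton, valleys_eq_valleyCount,
    zeroValleys_eq_valleyCount, valleyCount_pyramid, valleyCount_pyramid, pow_zero, pow_zero,
    mul_one]

/-- `U^{t+1} D` followed by the steps of `g` from position `t` on: for a `t`-Dyck path `g`,
this is `g` with a peak `UD` inserted after its first `t` steps. -/
def insertPeak (n t : ℕ) (g : Fin (2 * n) → Bool) : Fin (2 * (n + 1)) → Bool :=
  fun i => if (i : ℕ) ≤ t then true else if (i : ℕ) = t + 1 then false else stepAt g (i - 2)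

def erasePeak (n t : ℕ) (f : Fin (2 * (n + 1)) → Bool) : Fin (2 * n) → Bool :=
  fun i => if (i : ℕ) < t then true else stepAt f (i + 2)

section insertPeak

variable {n t : ℕ} {g : Fin (2 * n) → Bool}

lemma stepAt_insertPeak_of_le (htn : t ≤ n) {k : ℕ} (hk : k ≤ t) :
    stepAt (insertPeak n t g) k = true := by
  rw [stepAt_of_lt _ (by omega), insertPeak, if_pos hk]

lemma stepAt_insertPeak_succ (htn : t ≤ n) : stepAt (insertPeak n t g) (t + 1) = false := by
  rw [stepAt_of_lt _ (by omega), insertPeak, if_neg (by simp), if_pos rfl]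

lemma stepAt_insertPeak_add_two {k : ℕ} (hk : t ≤ k) :
    stepAt (insertPeak n t g) (k + 2) = stepAt g k := by
  rcases lt_or_ge k (2 * n) with hkn | hkn
  · rw [stepAt_of_lt _ (by omega), insertPeak]
    simp only [if_neg (show ¬k + 2 ≤ t by omega), if_neg (show k + 2 ≠ t + 1 by omega),
      Nat.add_sub_cancel]
  · rw [stepAt_of_le _ (by omega), stepAt_of_le _ hkn]

lemma upsBefore_insertPeak (htn : t ≤ n) (hg : ∀ i < t, stepAt g i = true) {k : ℕ}
    (hk : t ≤ k) : upsBefore (stepAt (insertPeak n t g)) (k + 2) = upsBefore (stepAt g) k + 1 := by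
  induction k, hk using Nat.le_induction with
  | base =>
    rw [upsBefore_succ, stepAt_insertPeak_succ htn,
      upsBefore_of_forall_lt fun i hi => stepAt_insertPeak_of_le htn (Nat.lt_succ_iff.1 hi),
      upsBefore_of_forall_lt hg]
    rfl
  | succ k hk ih =>
    rw [show k + 1 + 2 = k + 2 + 1 by omega, upsBefore_succ, ih, upsBefore_succ,
      stepAt_insertPeak_add_two hk]
    ring

lemma height_insertPeak_of_le (htn : t ≤ n) {k : ℕ} (hk : k ≤ t + 1) :
    height (stepAt (insertPeak n t g)) k = k := by
  rw [height, upsBefore_of_forall_lt fun i hi => stepAt_insertPeak_of_le htn (by omega)]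
  ring

lemma height_insertPeak (htn : t ≤ n) (hg : ∀ i < t, stepAt g i = true) {k : ℕ} (hk : t ≤ k) :
    height (stepAt (insertPeak n t g)) (k + 2) = height (stepAt g) k := by
  rw [height, height, upsBefore_insertPeak htn hg hk]
  push_cast
  ring

lemma height_of_forall_lt (hg : ∀ i < t, stepAt g i = true) {k : ℕ} (hk : k ≤ t) :
    height (stepAt g) k = k := by
  rw [height, upsBefore_of_forall_lt fun i hi => hg i (by omega)]
  ring

lemma isDyckFun_insertPeak_iff (htn : t ≤ n) (hg : ∀ i < t, stepAt g i = true) :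
    IsDyckFun (insertPeak n t g) ↔ IsDyckFun g := by
  have hshift := fun k (hk : t ≤ k) => height_insertPeak htn hg hk
  have hend : height (stepAt (insertPeak n t g)) (2 * (n + 1)) = height (stepAt g) (2 * n) :=
    hshift (2 * n) (by omega)
  rw [isDyckFun_iff_height, isDyckFun_iff_height, hend]
  refine and_congr_left fun _ => ⟨fun h k hk => ?_, fun h k hk => ?_⟩
  · rcases le_or_gt k t with hkt | hkt
    · rw [height_of_forall_lt hg hkt]; positivity
    · rw [← hshift k hkt.le]; exact h _ (by omega)
  · rcases le_or_gt k (t + 1) with hkt | hkt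
    · rw [height_insertPeak_of_le htn hkt]; positivity
    · obtain ⟨j, rfl⟩ : ∃ j, k = j + 2 := ⟨k - 2, by omega⟩
      rw [hshift j (by omega)]; exact h j (by omega)

lemma valleyCount_insertPeak (htn : t < n) (hg : ∀ i < t, stepAt g i = true) (P : ℤ → Prop)
    [DecidablePred P] :
    valleyCount (stepAt (insertPeak n t g)) (2 * (n + 1)) P =
      valleyCount (stepAt g) (2 * n) P + if stepAt g t = true ∧ P t then 1 else 0 := by
  unfold valleyCount
  rw [show 2 * (n + 1) - 1 = (t + 1) + ((2 * n - t - 1) + 1) by omega,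
    sum_range_add (n := t + 1), sum_range_succ' (n := 2 * n - t - 1),
    show 2 * n - 1 = t + (2 * n - t - 1) by omega, sum_range_add (n := t) (m := 2 * n - t - 1)]
  have hlow : ∑ k ∈ range (t + 1), (if stepAt (insertPeak n t g) k = false ∧
      stepAt (insertPeak n t g) (k + 1) = true ∧
      P (height (stepAt (insertPeak n t g)) (k + 1)) then 1 else 0) = 0 :=
    sum_eq_zero fun k hk => if_neg <| by
      simp [stepAt_insertPeak_of_le htn.le (Nat.lt_succ_iff.1 (mem_range.1 hk))]
  have hlow' : ∑ k ∈ range t, (if stepAt g k = false ∧ stepAt g (k + 1) = true ∧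
      P (height (stepAt g) (k + 1)) then 1 else 0) = 0 :=
    sum_eq_zero fun k hk => if_neg <| by simp [hg k (mem_range.1 hk)]
  have hpeak := stepAt_insertPeak_add_two (n := n) (g := g) (le_refl t)
  rw [hlow, hlow', add_zero, stepAt_insertPeak_succ htn.le, hpeak,
    height_insertPeak htn.le hg le_rfl, height_of_forall_lt hg le_rfl, zero_add, zero_add]
  simp only [true_and]
  congr 1
  refine sum_congr rfl fun j _ => ?_
  rw [show t + 1 + (j + 1) = t + j + 2 by ring, show t + j + 2 + 1 = t + j + 1 + 2 by ring,
    stepAt_insertPeak_add_two (by omega), stepAt_insertPeak_add_two (by omega),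
    height_insertPeak htn.le hg (by omega)]

lemma valleys_insertPeak (htn : t < n) (hg : ∀ i < t, stepAt g i = true) :
    valleys (insertPeak n t g) = valleys g + if stepAt g t = true then 1 else 0 := by
  simp [valleys_eq_valleyCount, valleyCount_insertPeak htn hg]

lemma zeroValleys_insertPeak (htn : t < n) (hg : ∀ i < t, stepAt g i = true) :
    zeroValleys (insertPeak n t g) = zeroValleys g + if stepAt g t = true ∧ t = 0 then 1 else 0 := by
  simp [zeroValleys_eq_valleyCount, valleyCount_insertPeak htn hg]

end insertPeak

lemma stepAt_erasePeak {n t : ℕ} (htn : t ≤ n) (f : Fin (2 * (n + 1)) → Bool) (k : ℕ) :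
    stepAt (erasePeak n t f) k = if k < t then true else stepAt f (k + 2) := by
  rcases lt_or_ge k (2 * n) with hk | hk
  · rw [stepAt_of_lt _ hk, erasePeak]
  · rw [stepAt_of_le _ hk, if_neg (by omega), stepAt_of_le _ (by omega)]

section bijection

variable {n t : ℕ}

lemma insertPeak_mem (htn : t ≤ n) {g : Fin (2 * n) → Bool} (hg : g ∈ dyckPaths n t) :
    insertPeak n t g ∈ (dyckPaths (n + 1) (t + 1)).filter fun f => stepAt f (t + 1) = false := by
  have hpre := fun i (hi : i < t) => stepAt_of_mem_dyckPaths hg hi (by omega)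
  simp only [dyckPaths, mem_filter, mem_univ, true_and] at hg ⊢
  refine ⟨⟨(isDyckFun_insertPeak_iff htn hpre).2 hg.1, fun i hi => ?_⟩,
    stepAt_insertPeak_succ htn⟩
  rw [← stepAt_of_lt (insertPeak n t g) i.2]
  exact stepAt_insertPeak_of_le htn (by omega)

lemma erasePeak_insertPeak (htn : t ≤ n) {g : Fin (2 * n) → Bool} (hg : g ∈ dyckPaths n t) :
    erasePeak n t (insertPeak n t g) = g := by
  refine ext_stepAt fun k hk => ?_
  rw [stepAt_erasePeak htn]
  split_ifs with hkt
  · exact (stepAt_of_mem_dyckPaths hg hkt hk).symm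
  · exact stepAt_insertPeak_add_two (by omega)

lemma insertPeak_erasePeak (htn : t ≤ n) {f : Fin (2 * (n + 1)) → Bool}
    (hf : f ∈ (dyckPaths (n + 1) (t + 1)).filter fun f => stepAt f (t + 1) = false) :
    insertPeak n t (erasePeak n t f) = f := by
  obtain ⟨hf, hpeak⟩ := mem_filter.1 hf
  refine ext_stepAt fun k hk => ?_
  rcases lt_trichotomy k (t + 1) with hkt | rfl | hkt
  · rw [stepAt_insertPeak_of_le htn (by omega), stepAt_of_mem_dyckPaths hf hkt hk]
  · rw [stepAt_insertPeak_succ htn, hpeak]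
  · obtain ⟨j, rfl⟩ : ∃ j, k = j + 2 := ⟨k - 2, by omega⟩
    rw [stepAt_insertPeak_add_two (by omega), stepAt_erasePeak htn, if_neg (by omega)]

lemma erasePeak_mem (htn : t ≤ n) {f : Fin (2 * (n + 1)) → Bool}
    (hf : f ∈ (dyckPaths (n + 1) (t + 1)).filter fun f => stepAt f (t + 1) = false) :
    erasePeak n t f ∈ dyckPaths n t := by
  have hpre : ∀ i < t, stepAt (erasePeak n t f) i = true := fun i hi => by
    rw [stepAt_erasePeak htn, if_pos hi]
  have hdyck := (mem_filter.1 (mem_filter.1 hf).1).2.1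
  rw [← insertPeak_erasePeak htn hf, isDyckFun_insertPeak_iff htn hpre] at hdyck
  simp only [dyckPaths, mem_filter, mem_univ, true_and]
  exact ⟨hdyck, fun i hi => by rw [← stepAt_of_lt (erasePeak n t f) i.2]; exact hpre i hi⟩

lemma sum_filter_stepAt_eq_false (htn : t < n) (x y : ℚ) :
    ∑ f ∈ (dyckPaths (n + 1) (t + 1)).filter (fun f => stepAt f (t + 1) = false),
      x ^ valleys f * y ^ zeroValleys f =
    ∑ g ∈ dyckPaths n t, x ^ valleys g * y ^ zeroValleys g *
      if stepAt g t = true then x * (if t = 0 then y else 1) else 1 := by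
  symm
  refine sum_nbij' (insertPeak n t) (erasePeak n t) (fun g hg => insertPeak_mem htn.le hg)
    (fun f hf => erasePeak_mem htn.le hf) (fun g hg => erasePeak_insertPeak htn.le hg)
    (fun f hf => insertPeak_erasePeak htn.le hf) fun g hg => ?_
  have hpre := fun i (hi : i < t) => stepAt_of_mem_dyckPaths hg hi (by omega)
  rw [valleys_insertPeak htn hpre, zeroValleys_insertPeak htn hpre, pow_add, pow_add]
  cases stepAt g t <;> by_cases ht0 : t = 0 <;> simp [ht0] <;> ring

lemma valleyPoly_succ (htn : t < n) (x y : ℚ) :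
    valleyPoly (n + 1) (t + 1) x y = valleyPoly (n + 1) (t + 2) x y + valleyPoly n t x y +
      (x * (if t = 0 then y else 1) - 1) * valleyPoly n (t + 1) x y := by
  have hup : (dyckPaths (n + 1) (t + 1)).filter (fun f => stepAt f (t + 1) = true) =
      dyckPaths (n + 1) (t + 2) := filter_dyckPaths_stepAt (by omega)
  have hup' : (dyckPaths n t).filter (fun g => stepAt g t = true) = dyckPaths n (t + 1) :=
    filter_dyckPaths_stepAt (by omega)
  rw [valleyPoly, ← sum_filter_add_sum_filter_not _ fun f => stepAt f (t + 1) = true, hup]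
  simp only [Bool.not_eq_true]
  rw [sum_filter_stepAt_eq_false htn, valleyPoly, valleyPoly, valleyPoly, ← hup', sum_filter,
    mul_sum, add_assoc, ← sum_add_distrib]
  congr 1
  refine sum_congr rfl fun g _ => ?_
  split_ifs <;> ring

end bijection

def hCoeff (m t k h : ℕ) : ℚ :=
  ((m + 1).choose k : ℚ) * ((t + k + h - 2).choose h) -
    (if k = 0 then 0 else (m.choose (k - 1) : ℚ)) * ((t + k + h - 1).choose h)

lemma cast_choose_succ_succ (a b : ℕ) :
    ((a + 1).choose (b + 1) : ℚ) = a.choose b + a.choose (b + 1) := by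
  rw [Nat.choose_succ_succ, Nat.cast_add]

lemma cast_choose_succ (m k : ℕ) :
    ((m + 1).choose k : ℚ) = m.choose k + if k = 0 then 0 else (m.choose (k - 1) : ℚ) := by
  cases k with
  | zero => simp
  | succ k => rw [cast_choose_succ_succ, add_comm]; simp

lemma hCoeff_succ_add_two (m s k h : ℕ) :
    hCoeff (m + 1) (s + 2) k h =
      (if k = 0 then 0 else hCoeff m (s + 3) (k - 1) h) + hCoeff (m + 1) (s + 1) k h +
        (if h = 0 then 0 else hCoeff m (s + 2) k (h - 1)) -
        (if k = 0 then 0 else hCoeff m (s + 2) (k - 1) h) := by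
  rcases k with _ | k <;> rcases h with _ | h <;> simp +arith [hCoeff]
  · rw [cast_choose_succ_succ, add_comm]
  · rw [cast_choose_succ_succ (s + k + h + 2), cast_choose_succ_succ (s + k + h + 1),
      cast_choose_succ_succ (m + 1), cast_choose_succ m k]
    split_ifs <;> ring

lemma hCoeff_succ_one (m k h : ℕ) :
    hCoeff (m + 1) 1 k h = (if k = 0 then 0 else hCoeff m 2 (k - 1) h) + hCoeff m 1 k h := by
  rcases k with _ | k <;> simp +arith [hCoeff]
  rw [cast_choose_succ_succ (m + 1), cast_choose_succ m k]
  split_ifs <;> ring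

lemma hCoeff_one_antidiagonal {m k : ℕ} (hk : k ≤ m + 1) : hCoeff m 1 k (m + 1 - k) = 0 := by
  rcases k with _ | k
  · simp [hCoeff, show 1 + (m + 1) - 2 = m by omega]
  · have hkm : k ≤ m := by omega
    simp +arith [hCoeff]
    rw [Nat.add_sub_cancel' hkm, Nat.choose_symm hkm, ← Nat.add_sub_add_right m 1 k,
      Nat.choose_symm (by omega)]
    ring

def triSum (m : ℕ) (F : ℕ → ℕ → ℚ) (x y : ℚ) : ℚ :=
  ∑ k ∈ range (m + 1), ∑ h ∈ range (m - k + 1), F k h * x ^ (m - k) * y ^ (m - k - h)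

section triSum

variable (m : ℕ) (F G : ℕ → ℕ → ℚ) (x y : ℚ)

lemma triSum_add : triSum m (F + G) x y = triSum m F x y + triSum m G x y := by
  simp only [triSum, Pi.add_apply, add_mul, sum_add_distrib]

lemma triSum_sub : triSum m (F - G) x y = triSum m F x y - triSum m G x y := by
  simp only [triSum, Pi.sub_apply, sub_mul, sum_sub_distrib]

lemma triSum_eq_triSum_succ :
    triSum m F x y = triSum (m + 1) (fun k h => if k = 0 then 0 else F (k - 1) h) x y := by
  rw [triSum, triSum, sum_range_succ' _ (m + 1)]
  simp

lemma mul_triSum :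
    x * triSum m F x y = triSum (m + 1) (fun k h => if h = 0 then 0 else F k (h - 1)) x y := by
  rw [triSum, triSum, sum_range_succ (n := m + 1), mul_sum]
  simp only [Nat.sub_self, zero_add, sum_range_one, if_pos, zero_mul, add_zero]
  refine sum_congr rfl fun k hk => ?_
  rw [show m + 1 - k = m - k + 1 by simp at hk; omega, sum_range_succ' (n := m - k + 1), mul_sum]
  simp [pow_succ]
  refine sum_congr rfl fun h _ => ?_
  ring

lemma mul_mul_triSum (hF : ∀ k ≤ m + 1, F k (m + 1 - k) = 0) :
    x * y * triSum m F x y = triSum (m + 1) F x y := by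
  have hlast : F (m + 1) 0 = 0 := by simpa using hF (m + 1) le_rfl
  rw [triSum, triSum, sum_range_succ (n := m + 1), mul_sum]
  simp only [Nat.sub_self, zero_add, sum_range_one, hlast, zero_mul, add_zero]
  refine sum_congr rfl fun k hk => ?_
  have hkm : k ≤ m := Nat.lt_succ_iff.1 (mem_range.1 hk)
  have hdiag : F k (m - k + 1) = 0 := by simpa [Nat.sub_add_comm hkm] using hF k (by omega)
  rw [Nat.sub_add_comm hkm, sum_range_succ (n := m - k + 1), hdiag, zero_mul, zero_mul, add_zero,
    mul_sum]
  refine sum_congr rfl fun h hh => ?_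
  rw [Nat.sub_add_comm (Nat.lt_succ_iff.1 (mem_range.1 hh))]
  ring

end triSum

def hPoly (m t : ℕ) (x y : ℚ) : ℚ := triSum m (hCoeff m t) x y

section hPoly

variable (m : ℕ) (x y : ℚ)

lemma hPoly_zero (t : ℕ) : hPoly 0 t x y = 1 := by
  simp [hPoly, triSum, hCoeff]

lemma hPoly_succ_add_two (s : ℕ) :
    hPoly (m + 1) (s + 2) x y =
      hPoly m (s + 3) x y + hPoly (m + 1) (s + 1) x y + (x - 1) * hPoly m (s + 2) x y := by
  have hrec : hCoeff (m + 1) (s + 2) =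
      (fun k h => if k = 0 then 0 else hCoeff m (s + 3) (k - 1) h) + hCoeff (m + 1) (s + 1) +
        (fun k h => if h = 0 then 0 else hCoeff m (s + 2) k (h - 1)) -
        (fun k h => if k = 0 then 0 else hCoeff m (s + 2) (k - 1) h) := by
    funext k h
    exact hCoeff_succ_add_two m s k h
  rw [hPoly, hrec, triSum_sub, triSum_add, triSum_add, sub_one_mul, hPoly, hPoly, hPoly,
    mul_triSum, triSum_eq_triSum_succ m (hCoeff m (s + 3)),
    triSum_eq_triSum_succ m (hCoeff m (s + 2))]
  ring

lemma hPoly_succ_one : hPoly (m + 1) 1 x y = hPoly m 2 x y + x * y * hPoly m 1 x y := by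
  have hrec : hCoeff (m + 1) 1 =
      (fun k h => if k = 0 then 0 else hCoeff m 2 (k - 1) h) + hCoeff m 1 := by
    funext k h
    exact hCoeff_succ_one m k h
  rw [hPoly, hrec, triSum_add, hPoly, hPoly, triSum_eq_triSum_succ m (hCoeff m 2),
    mul_mul_triSum m _ x y fun k hk => hCoeff_one_antidiagonal hk]

end hPoly

theorem valleyPoly_eq_hPoly (m t n : ℕ) (hn : n = m + t + 1) (x y : ℚ) :
    valleyPoly n (t + 1) x y = hPoly m (t + 1) x y := by
  induction m generalizing t n with
  | zero => rw [hn, zero_add, valleyPoly_self, hPoly_zero]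
  | succ m ihm =>
    induction t generalizing n with
    | zero =>
      obtain rfl : n = m + 2 := hn
      have hrec : valleyPoly (m + 2) 1 x y = valleyPoly (m + 2) 2 x y +
          valleyPoly (m + 1) 0 x y + (x * y - 1) * valleyPoly (m + 1) 1 x y := by
        simpa using valleyPoly_succ (n := m + 1) (t := 0) (by omega) x y
      rw [zero_add, hrec, valleyPoly_zero, ihm 1 _ rfl, ihm 0 _ rfl, hPoly_succ_one]
      ring
    | succ s ihs =>
      obtain rfl : n = m + s + 3 := by omega
      have hrec : valleyPoly (m + s + 3) (s + 2) x y = valleyPoly (m + s + 3) (s + 3) x y +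
          valleyPoly (m + s + 2) (s + 1) x y + (x - 1) * valleyPoly (m + s + 2) (s + 2) x y := by
        simpa using valleyPoly_succ (n := m + s + 2) (t := s + 1) (by omega) x y
      rw [hrec, ihm (s + 2) _ (by omega), ihm (s + 1) _ (by omega), ihs _ (by omega),
        hPoly_succ_add_two]

/-- The `m = 1` case of the `H`-triangle: for `t`-Dyck paths of length `2n`
(Dyck paths starting with `t` up-steps), with `v(P)` the number of valleys and
`r(P)` the number of valleys at height `0`,
`∑_P x^{v(P)} y^{r(P)} = ∑_{k=0}^{n−t} ∑_{h=0}^{n−t−k}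
  [C(n−t+1,k)·C(t+k+h−2,h) − C(n−t,k−1)·C(t+k+h−1,h)] x^{n−t−k} y^{n−t−k−h}`,
with the convention `C(a,−1) = 0`. -/
theorem h_triangle_dyck_paths (n t : ℕ) (ht : 1 ≤ t) (htn : t ≤ n) (x y : ℚ) :
    ∑ f ∈ Finset.univ.filter (fun f : Fin (2 * n) → Bool =>
        IsDyckFun f ∧ ∀ i : Fin (2 * n), (i : ℕ) < t → f i = true),
      x ^ valleys f * y ^ zeroValleys f =
    ∑ k ∈ Finset.range (n - t + 1), ∑ h ∈ Finset.range (n - t - k + 1),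
      (((n - t + 1).choose k : ℚ) * ((t + k + h - 2).choose h) -
          (if k = 0 then 0 else ((n - t).choose (k - 1) : ℚ)) *
            ((t + k + h - 1).choose h)) *
        x ^ (n - t - k) * y ^ (n - t - k - h) := by
  obtain ⟨s, rfl⟩ : ∃ s, t = s + 1 := ⟨t - 1, by omega⟩
  obtain ⟨m, rfl⟩ : ∃ m, n = m + s + 1 := ⟨n - (s + 1), by omega⟩
  rw [show m + s + 1 - (s + 1) = m by omega]
  exact valleyPoly_eq_hPoly m s _ rfl x y
end

section
/- Let f(z) be a formal power series with f(0)=0 and f'(0)≠0, and let F(z) be its compositional inverse. Then for all integers a and b: a·[coefficient of z^{-a} in F(z)^b] = −b·[coefficient of z^{-b} in f(z)^a], where coefficients of Laurent series are meant. -/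
/-- Truncated composition `f ∘ g` of formal power series; when the constant
coefficient of `g` vanishes this is the usual composition. -/
noncomputable def psComp {K : Type*} [Field K] (f g : PowerSeries K) : PowerSeries K :=
  PowerSeries.mk fun n =>
    ∑ k ∈ Finset.range (n + 1), PowerSeries.coeff k f * PowerSeries.coeff n (g ^ k)

/-!
Write `f = X·U` and `F = X·V` with units `U`, `V`; then `F ∘ f = X` says `V ∘ f = U⁻¹`, and
with `n = -a - b` the two sides are `a·[Xⁿ] V^b` and `-b·[Xⁿ] U^a` (both vanish when `n < 0`).
The coefficients of any `w` are recovered from `w ∘ f` by the residue formula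
`[Xⁿ] w = Res ((w ∘ f) · f^(-n-1) · f')`, which rests on `Res (f^(-k-1) f') = δ_{k0}`:
for `k > 0` the form `f^(-k-1) f'` is an exact derivative. Applied to `w = V^b` this gives
`[Xⁿ] V^b = [Xⁿ] (U^(a-1) · (X·U)')`, and `a·U^(a-1)·(X·U)' = a·U^a + X·(U^a)'` has
`n`-th coefficient `(a + n)·[Xⁿ] U^a = -b·[Xⁿ] U^a`.
-/

open PowerSeries Finset
open scoped PowerSeries

theorem map_units_zpow {M N F : Type*} [Monoid M] [Monoid N] [FunLike F M N]
    [MonoidHomClass F M N] (φ : F) {V : Mˣ} {W : Nˣ} (h : φ V = W) (b : ℤ) :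
    φ ↑(V ^ b) = ↑(W ^ b) := by
  obtain rfl : Units.map (φ : M →* N) V = W := Units.ext h
  exact congrArg Units.val (map_zpow (Units.map (φ : M →* N)) V b)

theorem psComp_eq_subst {K : Type*} [Field K] (f : K⟦X⟧) {g : K⟦X⟧}
    (hg : constantCoeff g = 0) : psComp f g = f.subst g := by
  ext n
  rw [psComp, coeff_mk, coeff_subst' (HasSubst.of_constantCoeff_zero' hg),
    finsum_eq_sum_of_support_subset _ (s := range (n + 1))]
  · simp only [smul_eq_mul]
  intro d hd
  simp only [coe_range, Set.mem_Iio, Nat.lt_succ_iff]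
  by_contra! hnd
  exact hd (by simp only [X_pow_dvd_iff.1 (pow_dvd_pow_of_dvd (X_dvd_iff.2 hg) d) n hnd,
    smul_zero])

namespace PowerSeries

theorem map_derivative {R S : Type*} [CommRing R] [CommRing S] (φ : R →+* S) (f : R⟦X⟧) :
    map φ (d⁄dX R f) = d⁄dX S (map φ f) := by
  ext n
  simp [coeff_derivative]

section CommRing

variable {R : Type*} [CommRing R]

theorem constantCoeff_subst_of_constantCoeff_eq_zero {a : R⟦X⟧} (ha : constantCoeff a = 0)
    (f : R⟦X⟧) : constantCoeff (f.subst a) = constantCoeff f := by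
  have := constantCoeff_subst_eq_zero ha (f - C (constantCoeff f)) (by simp)
  rw [subst_sub (HasSubst.of_constantCoeff_zero' ha), subst_C, map_sub, sub_eq_zero] at this
  exact this

theorem coeff_X_mul_derivative (f : R⟦X⟧) (n : ℕ) :
    coeff n (X * d⁄dX R f) = n * coeff n f := by
  cases n with
  | zero => simp
  | succ n => rw [coeff_succ_X_mul, coeff_derivative]; push_cast; ring

theorem derivative_unit_zpow (U : R⟦X⟧ˣ) (a : ℤ) :
    d⁄dX R ↑(U ^ a) = a • (↑(U ^ (a - 1)) * d⁄dX R ↑U) := by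
  have hmul : ∀ m k : ℤ, (↑(U ^ m) : R⟦X⟧) * ↑(U ^ k) = ↑(U ^ (m + k)) := fun m k => by
    rw [← Units.val_mul, zpow_add]
  induction a using Int.induction_on with
  | zero => simp
  | succ k ih =>
    rw [zpow_add_one, Units.val_mul, Derivation.leibniz, ih, add_sub_cancel_right]
    have hUk := hmul 1 (k - 1)
    rw [zpow_one, add_sub_cancel] at hUk
    simp only [smul_eq_mul, zsmul_eq_mul, ← hUk]
    push_cast
    ring
  | pred k ih =>
    rw [sub_eq_add_neg, zpow_add, Units.val_mul, Derivation.leibniz, ih, zpow_neg_one,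
      derivative_inv]
    have hpow : (↑(U ^ (-k : ℤ)) : R⟦X⟧) * ↑(U ^ (-2 : ℤ)) =
        ↑(U ^ (-1 : ℤ)) * ↑(U ^ (-k - 1 : ℤ)) := by
      rw [hmul, hmul]; ring_nf
    simp only [smul_eq_mul, zsmul_eq_mul, ← zpow_neg_one]
    rw [show (↑(U ^ (-1 : ℤ)) : R⟦X⟧) ^ 2 = ↑(U ^ (-2 : ℤ)) by
      rw [← Units.val_pow_eq_pow_val, ← zpow_natCast, ← zpow_mul]; norm_num]
    rw [show -(k : ℤ) + -1 - 1 = -1 + (-k - 1) by ring, ← hmul]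
    push_cast
    linear_combination (-d⁄dX R ↑U) * hpow

/- Over a ring without additive torsion this is the `s`-th coefficient of `(h ^ (s + 1))'`
divided by `s + 1`; in general it is specialized from the series with independent
indeterminates as coefficients over `ℤ`. -/
theorem coeff_succ_pow_succ_eq_coeff_pow_mul_derivative (h : R⟦X⟧) (s : ℕ) :
    coeff (s + 1) (h ^ (s + 1)) = coeff s (h ^ s * d⁄dX R h) := by
  let H : (MvPolynomial ℕ ℤ)⟦X⟧ := mk MvPolynomial.X
  have generic : coeff (s + 1) (H ^ (s + 1)) = coeff s (H ^ s * d⁄dX _ H) := by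
    refine mul_left_cancel₀ (Nat.cast_add_one_ne_zero s) ?_
    have := congrArg (coeff s) (derivative_pow H (s + 1))
    rw [coeff_derivative, ← map_natCast C, mul_assoc, coeff_C_mul, Nat.add_sub_cancel] at this
    push_cast at this
    linear_combination this
  let φ := MvPolynomial.eval₂Hom (Int.castRingHom R) (coeff · h)
  have hH : map φ H = h := by ext n; simp [H, φ]
  simpa [← coeff_map, map_derivative, hH] using congrArg φ generic

/- The residue of `g ^ (-k - 1) * g'` for `g = X * U`. -/
theorem coeff_zpow_neg_succ_mul_derivative_X_mul (U : R⟦X⟧ˣ) (k : ℕ) :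
    coeff k ((↑(U ^ (-(k + 1 : ℤ))) : R⟦X⟧) * d⁄dX R (X * (U : R⟦X⟧))) =
      if k = 0 then 1 else 0 := by
  rw [Derivation.leibniz, derivative_X, smul_eq_mul, smul_eq_mul, mul_one]
  cases k with
  | zero => simp [mul_add]
  | succ s =>
    set h : R⟦X⟧ := ↑U⁻¹
    have hU : (↑U : R⟦X⟧) * h = 1 := U.mul_inv
    have hdU : d⁄dX R ↑U = -(↑U : R⟦X⟧) ^ 2 * d⁄dX R h := by
      simpa only [inv_inv] using derivative_inv U⁻¹
    have hpow : (↑(U ^ (-((s + 1 : ℕ) + 1 : ℤ))) : R⟦X⟧) = h ^ (s + 2) := by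
      rw [← Units.val_pow_eq_pow_val, ← zpow_natCast, inv_zpow', neg_add', Nat.cast_add]
      push_cast; ring_nf
    have hexact : (↑(U ^ (-((s + 1 : ℕ) + 1 : ℤ))) : R⟦X⟧) * (X * d⁄dX R ↑U + (U : R⟦X⟧)) =
        h ^ (s + 1) - X * (h ^ s * d⁄dX R h) := by
      rw [hpow, hdU]
      linear_combination (h ^ (s + 1) - X * h ^ s * (↑U * h + 1) * d⁄dX R h) * hU
    rw [hexact, map_sub, coeff_succ_X_mul, coeff_succ_pow_succ_eq_coeff_pow_mul_derivative,
      sub_self, if_neg (by omega)]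

theorem coeff_X_mul_pow_mul_zpow_mul_derivative (U : R⟦X⟧ˣ) {j n : ℕ} (hjn : j ≤ n) :
    coeff n ((X * (U : R⟦X⟧)) ^ j *
      ((↑(U ^ (-(n + 1 : ℤ))) : R⟦X⟧) * d⁄dX R (X * (U : R⟦X⟧)))) =
      if j = n then 1 else 0 := by
  obtain ⟨k, rfl⟩ := Nat.exists_eq_add_of_le hjn
  have hU : (U : R⟦X⟧) ^ j * ↑(U ^ (-(↑(j + k) + 1 : ℤ))) = ↑(U ^ (-(k + 1 : ℤ))) := by
    rw [← Units.val_pow_eq_pow_val, ← Units.val_mul, ← zpow_natCast, ← zpow_add]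
    push_cast; ring_nf
  rw [mul_pow, mul_assoc, ← mul_assoc ((U : R⟦X⟧) ^ j), hU, add_comm j, coeff_X_pow_mul,
    coeff_zpow_neg_succ_mul_derivative_X_mul]
  simp

theorem coeff_eq_coeff_subst_mul (U : R⟦X⟧ˣ) (w : R⟦X⟧) (n : ℕ) :
    coeff n w = coeff n (w.subst (X * (U : R⟦X⟧)) *
      ((↑(U ^ (-(n + 1 : ℤ))) : R⟦X⟧) * d⁄dX R (X * (U : R⟦X⟧)))) := by
  set g : R⟦X⟧ := X * (U : R⟦X⟧)
  set c : R⟦X⟧ := ↑(U ^ (-(n + 1 : ℤ))) * d⁄dX R g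
  have hg : HasSubst g := HasSubst.of_constantCoeff_zero' (by simp [g])
  set τ := mk fun i ↦ coeff (i + (n + 1)) w
  have hsplit : w.subst g =
      g ^ (n + 1) * τ.subst g + ∑ j ∈ range (n + 1), C (coeff j w) * g ^ j := by
    conv_lhs => rw [eq_X_pow_mul_shift_add_trunc (n + 1) w]
    rw [subst_add hg, subst_mul hg, subst_pow hg, subst_X hg, subst_coe hg, Polynomial.aeval_def,
      eval₂_trunc_eq_sum_range]
    rfl
  have htail : coeff n (g ^ (n + 1) * τ.subst g * c) = 0 := by
    rw [mul_pow, mul_assoc, mul_assoc, coeff_X_pow_mul', if_neg (by omega)]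
  rw [hsplit, add_mul, map_add, htail, zero_add, sum_mul, map_sum,
    sum_eq_single_of_mem n (self_mem_range_succ n)]
  · rw [mul_assoc, coeff_C_mul, coeff_X_mul_pow_mul_zpow_mul_derivative U le_rfl, if_pos rfl,
      mul_one]
  · intro j hj hjn
    rw [mul_assoc, coeff_C_mul, coeff_X_mul_pow_mul_zpow_mul_derivative U (by simp at hj; omega),
      if_neg hjn, mul_zero]

theorem zsmul_zpow_sub_one_mul_derivative_X_mul (U : R⟦X⟧ˣ) (a : ℤ) :
    a • ((↑(U ^ (a - 1)) : R⟦X⟧) * d⁄dX R (X * (U : R⟦X⟧))) =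
      a • (↑(U ^ a) : R⟦X⟧) + X * d⁄dX R ↑(U ^ a) := by
  have hU : (↑(U ^ (a - 1)) : R⟦X⟧) * ↑U = ↑(U ^ a) := by
    rw [← Units.val_mul, ← zpow_add_one, sub_add_cancel]
  rw [derivative_unit_zpow, Derivation.leibniz, derivative_X, smul_eq_mul, smul_eq_mul, mul_one,
    ← hU, mul_smul_comm]
  ring_nf

theorem zsmul_coeff_zpow_eq_neg_zsmul_coeff_zpow (U V : R⟦X⟧ˣ)
    (hUV : (V : R⟦X⟧).subst (X * (U : R⟦X⟧)) = ↑U⁻¹) {a b : ℤ} {n : ℕ} (h : a + b + n = 0) :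
    a • coeff n (↑(V ^ b) : R⟦X⟧) = -(b • coeff n (↑(U ^ a) : R⟦X⟧)) := by
  have hg : HasSubst (X * (U : R⟦X⟧)) := HasSubst.of_constantCoeff_zero' (by simp)
  have hVb : (↑(V ^ b) : R⟦X⟧).subst (X * (U : R⟦X⟧)) = ↑(U ^ (-b)) := by
    rw [← coe_substAlgHom hg, map_units_zpow _ (W := U⁻¹) (by rwa [coe_substAlgHom]), inv_zpow']
  rw [coeff_eq_coeff_subst_mul U, hVb, ← mul_assoc, ← Units.val_mul, ← zpow_add,
    show -b + -(n + 1) = a - 1 by omega, ← map_zsmul, zsmul_zpow_sub_one_mul_derivative_X_mul,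
    map_add, map_zsmul, coeff_X_mul_derivative]
  have h' := congrArg (Int.cast : ℤ → R) h
  push_cast at h'
  simp only [zsmul_eq_mul]
  linear_combination coeff n (↑(U ^ a) : R⟦X⟧) * h'

end CommRing

end PowerSeries

theorem HahnSeries.ofPowerSeries_X_mul_zpow {K : Type*} [Field K] (U : K⟦X⟧ˣ) (a : ℤ) :
    ofPowerSeries ℤ K (X * (U : K⟦X⟧)) ^ a = single a 1 * ofPowerSeries ℤ K ↑(U ^ a) := by
  rw [map_mul, ofPowerSeries_X, mul_zpow, ← RatFunc.single_zpow,
    map_units_zpow (ofPowerSeries ℤ K) (W := Units.map _ U) rfl, Units.val_zpow_eq_zpow_val]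
  rfl

theorem lagrange_inversion_general {K : Type*} [Field K] (f F : PowerSeries K)
    (hf0 : PowerSeries.constantCoeff f = 0)
    (hF0 : PowerSeries.constantCoeff F = 0)
    (hFf : psComp F f = PowerSeries.X) :
    ∀ a b : ℤ,
      a • ((HahnSeries.ofPowerSeries ℤ K F ^ b).coeff (-a)) =
        -(b • ((HahnSeries.ofPowerSeries ℤ K f ^ a).coeff (-b))) := by
  intro a b
  obtain ⟨u, rfl⟩ := X_dvd_iff.2 hf0
  obtain ⟨v, rfl⟩ := X_dvd_iff.2 hF0
  have hg : HasSubst (X * u) := HasSubst.of_constantCoeff_zero' hf0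
  have hvu : u * v.subst (X * u) = 1 := by
    rw [psComp_eq_subst _ hf0, subst_mul hg, subst_X hg, mul_assoc] at hFf
    exact mul_left_cancel₀ X_ne_zero (hFf.trans (mul_one X).symm)
  have huv0 := congrArg constantCoeff hvu
  rw [map_mul, constantCoeff_subst_of_constantCoeff_eq_zero hf0, map_one] at huv0
  obtain ⟨U, rfl⟩ : IsUnit u := isUnit_iff_constantCoeff.2 (.of_mul_eq_one _ huv0)
  obtain ⟨V, rfl⟩ : IsUnit v := isUnit_iff_constantCoeff.2 (.of_mul_eq_one_right _ huv0)
  have hUV : (V : K⟦X⟧).subst (X * (U : K⟦X⟧)) = ↑U⁻¹ :=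
    (Units.inv_eq_of_mul_eq_one_right hvu).symm
  rw [HahnSeries.ofPowerSeries_X_mul_zpow, HahnSeries.ofPowerSeries_X_mul_zpow,
    HahnSeries.coeff_single_mul, HahnSeries.coeff_single_mul, one_mul, one_mul, coeff_coe,
    coeff_coe, show -b - a = -a - b by ring]
  split_ifs
  · simp
  · exact zsmul_coeff_zpow_eq_neg_zsmul_coeff_zpow U V hUV (by omega)

/-- Lagrange inversion: if `f` is a formal power series with `f(0) = 0` and
`f'(0) ≠ 0`, and `F` is its compositional inverse, then for all integers `a,b`,
`a·[z^{-a}] F(z)^b = −b·[z^{-b}] f(z)^a`, i.e.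
`a·[z^0] z^a F(z)^b = −b·[z^0] z^b f(z)^a` as formal Laurent series. -/
theorem lagrange_inversion {K : Type*} [Field K] (f F : PowerSeries K)
    (hf0 : PowerSeries.constantCoeff f = 0)
    (hf1 : PowerSeries.coeff 1 f ≠ 0)
    (hF0 : PowerSeries.constantCoeff F = 0)
    (hFf : psComp F f = PowerSeries.X)
    (hfF : psComp f F = PowerSeries.X) :
    ∀ a b : ℤ,
      a • ((HahnSeries.ofPowerSeries ℤ K F ^ b).coeff (-a)) =
        -(b • ((HahnSeries.ofPowerSeries ℤ K f ^ a).coeff (-b))) :=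
  lagrange_inversion_general f F hf0 hF0 hFf
end
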